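/- arXiv:1603.06556 — 6 statements merged into one kernel-verified Lean document; each statement's English description precedes it below -/
import Mathlib

section
/- Let N items have positive weights ω(1),...,ω(N) summing to 1 and real values ν(1),...,ν(N) such that ω(i)>ω(j) implies ν(i)≥ν(j). Let X = ν(I₁)+...+ν(Iₙ) where (I₁,...,Iₙ) is a weighted sample without replacement (successive sampling: P((I₁,...,Iₙ)=(i₁,...,iₙ)) = ∏ₖ ω(iₖ)/(1-ω(i₁)-...-ω(i_{k-1})) for distinct indices), and Y = ν(J₁)+...+ν(Jₙ) where J₁,...,Jₙ are i.i.d. with P(J₁=j)=ω(j). Then for every non-decreasing convex function f: ℝ→ℝ, E[f(X)] ≤ E[f(Y)]. -/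
/-!
Both expectations (`expectWithout`, `expectWith` below) satisfy a recursion on the first draw, so
by induction on the sample size it suffices to show that the first draw without replacement may be
replaced by a draw with replacement. Expanding one further draw, the difference of the two sides
becomes a sum over pairs `i ≠ j` of the frame, and each pair contributes a nonnegative amount by an
exchange argument: if `ω j ≤ ω i` and `ν j ≤ ν i`, replacing `i` by `j` in the frame shrinks the
increments of `expectWithout` at most by the factor `ω j / ω i`. At sample size zero this is the
fact that the increments of a convex function grow under translation to the right.
-/

open Finset

theorem ConvexOn.map_sub_map_le_map_add_sub_map_add {𝕜 : Type*} [Field 𝕜] [LinearOrder 𝕜]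
    [IsStrictOrderedRing 𝕜] {s : Set 𝕜} {f : 𝕜 → 𝕜} (hf : ConvexOn 𝕜 s f) {p q d : 𝕜}
    (hq : q ∈ s) (hpd : p + d ∈ s) (hqp : q ≤ p) (hd : 0 ≤ d) : f p - f q ≤ f (p + d) - f (q + d) := by
  rcases hqp.eq_or_lt with rfl | hqp
  · simp
  rcases hd.eq_or_lt with rfl | hd
  · simp
  -- `p` and `q + d` are the convex combinations of `q` and `p + d` with swapped weights
  have hs : 0 < p - q + d := by linarith
  have hw : d / (p - q + d) + (p - q) / (p - q + d) = 1 := by field_simp; ring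
  have h₁ := hf.2 hq hpd (by positivity) (div_nonneg (sub_nonneg.2 hqp.le) hs.le) hw
  have h₂ := hf.2 hq hpd (div_nonneg (sub_nonneg.2 hqp.le) hs.le) (by positivity)
    ((add_comm _ _).trans hw)
  simp only [smul_eq_mul] at h₁ h₂
  rw [show d / (p - q + d) * q + (p - q) / (p - q + d) * (p + d) = p by field_simp; ring] at h₁
  rw [show (p - q) / (p - q + d) * q + d / (p - q + d) * (p + d) = q + d by field_simp; ring] at h₂
  linear_combination h₁ + h₂ + (f q + f (p + d)) * hw

theorem Monovary.and_le_or_and_le {ι α β : Type*} [LinearOrder α] [LinearOrder β] {f : ι → α}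
    {g : ι → β} (h : Monovary f g) (i j : ι) :
    (g i ≤ g j ∧ f i ≤ f j) ∨ (g j ≤ g i ∧ f j ≤ f i) := by
  rcases lt_trichotomy (g i) (g j) with hg | hg | hg
  · exact .inl ⟨hg.le, h hg⟩
  · rcases le_total (f i) (f j) with hf | hf
    exacts [.inl ⟨hg.le, hf⟩, .inr ⟨hg.ge, hf⟩]
  · exact .inr ⟨hg.le, h hg⟩

theorem Fin.sum_Iio_succ_cons {ι M : Type*} [AddCommMonoid M] {n : ℕ} (g : ι → M) (i : ι)
    (s : Fin n → ι) (k : Fin n) :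
    ∑ m ∈ Iio k.succ, g ((Fin.cons i s : Fin (n + 1) → ι) m) = g i + ∑ m ∈ Iio k, g (s m) := by
  rw [← Ico_bot, bot_eq_zero, ← Ioo_insert_left (Fin.succ_pos k), ← Fin.map_succEmb_Iio,
    sum_insert (by simp), sum_map]
  simp

theorem Fintype.sum_fin_succ_pi {ι M : Type*} [Fintype ι] [AddCommMonoid M] {n : ℕ}
    (G : (Fin (n + 1) → ι) → M) :
    ∑ t, G t = ∑ i, ∑ s : Fin n → ι, G (Fin.cons i s) := by
  rw [← (Fin.consEquiv fun _ ↦ ι).sum_comp, Fintype.sum_prod_type]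
  rfl

theorem Finset.sum_sum_erase_nonneg {ι : Type*} [DecidableEq ι] {T : Finset ι} {H : ι → ι → ℝ}
    (hH : ∀ i ∈ T, ∀ j ∈ T, i ≠ j → 0 ≤ H i j + H j i) :
    0 ≤ ∑ i ∈ T, ∑ j ∈ T.erase i, H i j := by
  have hswap : ∑ i ∈ T, ∑ j ∈ T.erase i, H j i = ∑ i ∈ T, ∑ j ∈ T.erase i, H i j :=
    sum_comm' fun i j ↦ by simp only [mem_erase]; tauto
  have h2 : 0 ≤ ∑ i ∈ T, ∑ j ∈ T.erase i, (H i j + H j i) :=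
    sum_nonneg fun i hi ↦ sum_nonneg fun j hj ↦
      hH i hi j (mem_of_mem_erase hj) (ne_of_mem_erase hj).symm
  simp only [sum_add_distrib, hswap] at h2
  linarith

namespace WeightedSampling

variable {ι : Type*}

noncomputable def weight (ω : ι → ℝ) (T : Finset ι) : ℝ := ∑ i ∈ T, ω i

lemma weight_nonneg {ω : ι → ℝ} (hω : ∀ i, 0 ≤ ω i) (T : Finset ι) : 0 ≤ weight ω T :=
  sum_nonneg fun i _ ↦ hω i

lemma weight_pos {ω : ι → ℝ} (hω : ∀ i, 0 < ω i) {T : Finset ι} (hT : T.Nonempty) :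
    0 < weight ω T :=
  sum_pos (fun i _ ↦ hω i) hT

/-- `expectWith ω ν f m T a` is `𝔼 f (a + ν J₁ + ⋯ + ν Jₘ)` for i.i.d. draws `J₁, …, Jₘ` from `T`
with probabilities proportional to `ω`; `expectWithout` is the same for a successive sample
`I₁, …, Iₘ` from `T`, drawn without replacement. -/
noncomputable def expectWith (ω ν : ι → ℝ) (f : ℝ → ℝ) : ℕ → Finset ι → ℝ → ℝ
  | 0, _, a => f a
  | m + 1, T, a => ∑ i ∈ T, ω i / weight ω T * expectWith ω ν f m T (a + ν i)

variable {ω ν : ι → ℝ} {f : ℝ → ℝ}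

lemma expectWith_univ_eq_sum [Fintype ι] (n : ℕ) (a : ℝ) :
    expectWith ω ν f n univ a =
      ∑ t : Fin n → ι, (∏ k, ω (t k) / weight ω univ) * f (a + ∑ k, ν (t k)) := by
  induction n generalizing a with
  | zero => simp [expectWith]
  | succ n ih =>
    rw [Fintype.sum_fin_succ_pi, expectWith]
    refine sum_congr rfl fun i _ ↦ ?_
    rw [ih, mul_sum]
    refine sum_congr rfl fun s _ ↦ ?_
    simp only [Fin.prod_univ_succ, Fin.sum_univ_succ, Fin.cons_zero, Fin.cons_succ]
    ring_nf

variable [DecidableEq ι]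

noncomputable def expectWithout (ω ν : ι → ℝ) (f : ℝ → ℝ) : ℕ → Finset ι → ℝ → ℝ
  | 0, _, a => f a
  | m + 1, T, a => ∑ i ∈ T, ω i / weight ω T * expectWithout ω ν f m (T.erase i) (a + ν i)

variable {T U : Finset ι} {i j : ι}

lemma weight_erase (hi : i ∈ T) : weight ω (T.erase i) = weight ω T - ω i :=
  sum_erase_eq_sub hi

lemma weight_insert (hi : i ∉ T) : weight ω (insert i T) = ω i + weight ω T :=
  sum_insert hi

lemma expectWithout_monotone (hω : ∀ i, 0 ≤ ω i) (hf : Monotone f) (m : ℕ) (T : Finset ι) :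
    Monotone (expectWithout ω ν f m T) := by
  induction m generalizing T with
  | zero => exact hf
  | succ m ih =>
    intro a b hab
    exact sum_le_sum fun i _ ↦ mul_le_mul_of_nonneg_left (ih _ (by linarith))
      (div_nonneg (hω i) (weight_nonneg hω T))

lemma expectWithout_succ_insert_sub (hi : i ∉ U) (m : ℕ) (p q : ℝ) :
    expectWithout ω ν f (m + 1) (insert i U) p - expectWithout ω ν f (m + 1) (insert i U) q =
      ω i / weight ω (insert i U) *
          (expectWithout ω ν f m U (p + ν i) - expectWithout ω ν f m U (q + ν i)) +
        ∑ k ∈ U, ω k / weight ω (insert i U) *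
          (expectWithout ω ν f m (insert i (U.erase k)) (p + ν k) -
            expectWithout ω ν f m (insert i (U.erase k)) (q + ν k)) := by
  have hsplit : ∀ x, expectWithout ω ν f (m + 1) (insert i U) x =
      ω i / weight ω (insert i U) * expectWithout ω ν f m U (x + ν i) +
        ∑ k ∈ U, ω k / weight ω (insert i U) *
          expectWithout ω ν f m (insert i (U.erase k)) (x + ν k) := fun x ↦ by
    rw [expectWithout, sum_insert hi, erase_insert hi]
    congr 1
    exact sum_congr rfl fun k hk ↦ by rw [erase_insert_of_ne (ne_of_mem_of_not_mem hk hi).symm]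
  simp only [hsplit, mul_sub, sum_sub_distrib]
  ring

lemma mul_expectWithout_insert_sub_le (hω : ∀ i, 0 < ω i) (hf : Monotone f)
    (hconv : ConvexOn ℝ Set.univ f) (hi : i ∉ U) (hj : j ∉ U) (hωij : ω j ≤ ω i)
    (hνij : ν j ≤ ν i) (m : ℕ) {p q : ℝ} (hqp : q ≤ p) :
    ω j * (expectWithout ω ν f m (insert i U) p - expectWithout ω ν f m (insert i U) q) ≤
      ω i * (expectWithout ω ν f m (insert j U) (p + (ν i - ν j)) -
        expectWithout ω ν f m (insert j U) (q + (ν i - ν j))) := by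
  induction m generalizing U p q with
  | zero =>
    have hΔ : f p - f q ≤ f (p + (ν i - ν j)) - f (q + (ν i - ν j)) :=
      hconv.map_sub_map_le_map_add_sub_map_add trivial trivial hqp (by linarith)
    have hΔ₀ : 0 ≤ f (p + (ν i - ν j)) - f (q + (ν i - ν j)) := sub_nonneg.2 (hf (by linarith))
    calc ω j * (f p - f q) ≤ ω j * (f (p + (ν i - ν j)) - f (q + (ν i - ν j))) := by
          gcongr; exact (hω j).le
      _ ≤ ω i * (f (p + (ν i - ν j)) - f (q + (ν i - ν j))) := by gcongr
  | succ m ih =>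
    have hWi : 0 < weight ω (insert i U) := weight_pos hω (insert_nonempty i U)
    have hW : ∀ k, ω k / weight ω (insert i U) ≤ ω k / weight ω (insert j U) := fun k ↦
      div_le_div_of_nonneg_left (hω k).le (weight_pos hω (insert_nonempty j U))
        (by rw [weight_insert hi, weight_insert hj]; linarith)
    have hmono := expectWithout_monotone (ν := ν) (fun k ↦ (hω k).le) hf m
    rw [expectWithout_succ_insert_sub hi, expectWithout_succ_insert_sub hj, mul_add, mul_add,
      mul_sum, mul_sum, show p + (ν i - ν j) + ν j = p + ν i by ring,
      show q + (ν i - ν j) + ν j = q + ν i by ring]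
    have hωi : 0 ≤ ω i := (hω i).le
    refine add_le_add ?_ (sum_le_sum fun k hk ↦ ?_)
    · have hΔ₀ := sub_nonneg.2 (hmono U (by linarith : q + ν i ≤ p + ν i))
      calc _ = ω i * (ω j / weight ω (insert i U) *
              (expectWithout ω ν f m U (p + ν i) - expectWithout ω ν f m U (q + ν i))) := by ring
        _ ≤ _ := by gcongr ω i * (?_ * _); exact hW j
    · have hk := ih (U := U.erase k) (fun h ↦ hi (mem_of_mem_erase h))
        (fun h ↦ hj (mem_of_mem_erase h)) (by linarith : q + ν k ≤ p + ν k)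
      rw [add_right_comm p, add_right_comm q] at hk
      have hΔ₀ := sub_nonneg.2 (hmono (insert j (U.erase k))
        (by linarith : q + (ν i - ν j) + ν k ≤ p + (ν i - ν j) + ν k))
      have hωk : 0 ≤ ω k / weight ω (insert i U) := div_nonneg (hω k).le hWi.le
      calc _ = ω k / weight ω (insert i U) * (ω j *
              (expectWithout ω ν f m (insert i (U.erase k)) (p + ν k) -
                expectWithout ω ν f m (insert i (U.erase k)) (q + ν k))) := by ring
        _ ≤ ω k / weight ω (insert i U) * (ω i *
              (expectWithout ω ν f m (insert j (U.erase k)) (p + (ν i - ν j) + ν k) -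
                expectWithout ω ν f m (insert j (U.erase k)) (q + (ν i - ν j) + ν k))) := by
            gcongr
        _ ≤ ω k / weight ω (insert j U) * (ω i *
              (expectWithout ω ν f m (insert j (U.erase k)) (p + (ν i - ν j) + ν k) -
                expectWithout ω ν f m (insert j (U.erase k)) (q + (ν i - ν j) + ν k))) :=
            mul_le_mul_of_nonneg_right (hW k) (mul_nonneg hωi hΔ₀)
        _ = _ := by ring

lemma sum_div_weight_sub_sum_erase_div_weight (hi : i ∈ T) (hT : weight ω T ≠ 0)
    (hTi : weight ω (T.erase i) ≠ 0) (e : ι → ℝ) :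
    ∑ j ∈ T, ω j / weight ω T * e j - ∑ j ∈ T.erase i, ω j / weight ω (T.erase i) * e j =
      ω i / (weight ω T * weight ω (T.erase i)) * ∑ j ∈ T.erase i, ω j * (e i - e j) := by
  have hrest : ∑ j ∈ T.erase i, ω j = weight ω T - ω i := weight_erase hi
  rw [weight_erase hi] at hTi ⊢
  rw [← add_sum_erase _ _ hi]
  simp only [div_mul_eq_mul_div, ← sum_div, mul_sub, sum_sub_distrib, ← sum_mul, hrest]
  field_simp
  ring

lemma sum_sum_erase_le_sum_sum (hω : ∀ i, 0 < ω i) (hT : 2 ≤ #T) (E : ι → ι → ℝ)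
    (hpair : ∀ i ∈ T, ∀ j ∈ T, i ≠ j →
      0 ≤ ω i ^ 2 * ω j / weight ω (T.erase i) * (E i i - E i j) +
        ω j ^ 2 * ω i / weight ω (T.erase j) * (E j j - E j i)) :
    ∑ i ∈ T, ω i / weight ω T * ∑ j ∈ T.erase i, ω j / weight ω (T.erase i) * E i j ≤
      ∑ i ∈ T, ω i / weight ω T * ∑ j ∈ T, ω j / weight ω T * E i j := by
  have hW : weight ω T ≠ 0 := (weight_pos hω (card_pos.1 (by omega))).ne'
  have hdiff : ∀ i ∈ T, ω i / weight ω T * ∑ j ∈ T, ω j / weight ω T * E i j -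
      ω i / weight ω T * ∑ j ∈ T.erase i, ω j / weight ω (T.erase i) * E i j =
        (∑ j ∈ T.erase i, ω i ^ 2 * ω j / weight ω (T.erase i) * (E i i - E i j)) /
          weight ω T ^ 2 := fun i hi ↦ by
    have hWi : weight ω (T.erase i) ≠ 0 :=
      (weight_pos hω (card_pos.1 (by rw [card_erase_of_mem hi]; omega))).ne'
    rw [← mul_sub, sum_div_weight_sub_sum_erase_div_weight hi hW hWi, mul_sum, mul_sum, sum_div]
    exact sum_congr rfl fun j _ ↦ by field_simp
  rw [← sub_nonneg, ← sum_sub_distrib, sum_congr rfl hdiff, ← sum_div]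
  exact div_nonneg (sum_sum_erase_nonneg hpair) (sq_nonneg _)

lemma expectWithout_pair_nonneg (hω : ∀ i, 0 < ω i) (hf : Monotone f)
    (hconv : ConvexOn ℝ Set.univ f) (hi : i ∈ T) (hj : j ∈ T) (hij : i ≠ j) (hωij : ω j ≤ ω i)
    (hνij : ν j ≤ ν i) (m : ℕ) (a : ℝ) :
    0 ≤ ω i ^ 2 * ω j / weight ω (T.erase i) * (expectWithout ω ν f m (T.erase i) (a + ν i + ν i) -
          expectWithout ω ν f m (T.erase i) (a + ν i + ν j)) +
      ω j ^ 2 * ω i / weight ω (T.erase j) * (expectWithout ω ν f m (T.erase j) (a + ν j + ν j) -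
          expectWithout ω ν f m (T.erase j) (a + ν j + ν i)) := by
  set X := expectWithout ω ν f m (T.erase i) (a + ν i + ν i) -
    expectWithout ω ν f m (T.erase i) (a + ν i + ν j)
  set Y := expectWithout ω ν f m (T.erase j) (a + ν j + ν j) -
    expectWithout ω ν f m (T.erase j) (a + ν j + ν i)
  have hjTi : j ∈ T.erase i := mem_erase.2 ⟨hij.symm, hj⟩
  have hiTj : i ∈ T.erase j := mem_erase.2 ⟨hij, hi⟩
  -- both `T.erase i` and `T.erase j` are obtained from `(T.erase j).erase i` by one insertion
  have hkey : ω j * -Y ≤ ω i * X := by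
    have h := mul_expectWithout_insert_sub_le hω hf hconv (U := (T.erase j).erase i)
      (notMem_erase i _) (by rw [erase_right_comm]; exact notMem_erase j _) hωij hνij m
      (by linarith : a + ν j + ν j ≤ a + ν j + ν i)
    rw [insert_erase hiTj, erase_right_comm, insert_erase hjTi,
      show a + ν j + ν i + (ν i - ν j) = a + ν i + ν i by ring,
      show a + ν j + ν j + (ν i - ν j) = a + ν i + ν j by ring] at h
    linarith
  have hX : 0 ≤ X := sub_nonneg.2 <|
    expectWithout_monotone (fun k ↦ (hω k).le) hf m _ (by linarith)
  have hWi : 0 < weight ω (T.erase i) := weight_pos hω ⟨j, hjTi⟩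
  have hWij : weight ω (T.erase i) ≤ weight ω (T.erase j) := by
    rw [weight_erase hi, weight_erase hj]; linarith
  have h₁ := mul_le_mul_of_nonneg_left hkey
    (div_nonneg (mul_nonneg (hω j).le (hω i).le) (hWi.trans_le hWij).le)
  have h₂ := mul_nonneg (sub_nonneg.2 <|
    div_le_div_of_nonneg_left (mul_nonneg (sq_nonneg (ω i)) (hω j).le) hWi hWij) hX
  linear_combination h₁ + h₂

lemma sum_sum_erase_expectWithout_le (hω : ∀ i, 0 < ω i) (hf : Monotone f)
    (hconv : ConvexOn ℝ Set.univ f) (hων : Monovary ν ω) (hT : 2 ≤ #T) (m : ℕ) (a : ℝ) :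
    ∑ i ∈ T, ω i / weight ω T * ∑ j ∈ T.erase i,
        ω j / weight ω (T.erase i) * expectWithout ω ν f m (T.erase i) (a + ν i + ν j) ≤
      ∑ i ∈ T, ω i / weight ω T * ∑ j ∈ T,
        ω j / weight ω T * expectWithout ω ν f m (T.erase i) (a + ν i + ν j) := by
  refine sum_sum_erase_le_sum_sum hω hT _ fun i hi j hj hij ↦ ?_
  rcases hων.and_le_or_and_le j i with ⟨hωij, hνij⟩ | ⟨hωji, hνji⟩
  · exact expectWithout_pair_nonneg hω hf hconv hi hj hij hωij hνij m a
  · rw [add_comm]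
    exact expectWithout_pair_nonneg hω hf hconv hj hi hij.symm hωji hνji m a

lemma expectWithout_succ_le (hω : ∀ i, 0 < ω i) (hf : Monotone f)
    (hconv : ConvexOn ℝ Set.univ f) (hων : Monovary ν ω) (n : ℕ) (hn : n + 1 ≤ #T) (a : ℝ) :
    expectWithout ω ν f (n + 1) T a ≤
      ∑ j ∈ T, ω j / weight ω T * expectWithout ω ν f n T (a + ν j) := by
  induction n generalizing T a with
  | zero => exact le_rfl
  | succ n ih =>
    calc expectWithout ω ν f (n + 2) T a
        ≤ ∑ i ∈ T, ω i / weight ω T * ∑ j ∈ T.erase i,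
            ω j / weight ω (T.erase i) * expectWithout ω ν f n (T.erase i) (a + ν i + ν j) :=
          sum_le_sum fun i hi ↦ mul_le_mul_of_nonneg_left
            (ih (by rw [card_erase_of_mem hi]; omega) _)
            (div_nonneg (hω i).le (weight_nonneg (fun k ↦ (hω k).le) T))
      _ ≤ ∑ i ∈ T, ω i / weight ω T * ∑ j ∈ T,
            ω j / weight ω T * expectWithout ω ν f n (T.erase i) (a + ν i + ν j) :=
          sum_sum_erase_expectWithout_le hω hf hconv hων (by omega) n a
      _ = ∑ j ∈ T, ω j / weight ω T * expectWithout ω ν f (n + 1) T (a + ν j) := by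
          simp only [expectWithout, mul_sum]
          rw [sum_comm]
          refine sum_congr rfl fun j _ ↦ sum_congr rfl fun i _ ↦ ?_
          rw [add_right_comm]
          ring

lemma expectWithout_le_expectWith (hω : ∀ i, 0 < ω i) (hf : Monotone f)
    (hconv : ConvexOn ℝ Set.univ f) (hων : Monovary ν ω) (n : ℕ) (hn : n ≤ #T) (a : ℝ) :
    expectWithout ω ν f n T a ≤ expectWith ω ν f n T a := by
  induction n generalizing a with
  | zero => exact le_rfl
  | succ n ih =>
    calc expectWithout ω ν f (n + 1) T a
        ≤ ∑ j ∈ T, ω j / weight ω T * expectWithout ω ν f n T (a + ν j) :=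
          expectWithout_succ_le hω hf hconv hων n hn a
      _ ≤ ∑ j ∈ T, ω j / weight ω T * expectWith ω ν f n T (a + ν j) :=
          sum_le_sum fun j _ ↦ mul_le_mul_of_nonneg_left (ih (by omega) _)
            (div_nonneg (hω j).le (weight_nonneg (fun k ↦ (hω k).le) T))
      _ = expectWith ω ν f (n + 1) T a := rfl

noncomputable def successiveProb (ω : ι → ℝ) (T : Finset ι) {n : ℕ} (t : Fin n → ι) : ℝ :=
  if Function.Injective t ∧ ∀ k, t k ∈ T then
    ∏ k, ω (t k) / (weight ω T - ∑ m ∈ Iio k, ω (t m))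
  else 0

lemma successiveProb_cons {n : ℕ} (i : ι) (s : Fin n → ι) :
    successiveProb ω T (Fin.cons i s : Fin (n + 1) → ι) =
      if i ∈ T then ω i / weight ω T * successiveProb ω (T.erase i) s else 0 := by
  have hcond : (Function.Injective (Fin.cons i s : Fin (n + 1) → ι) ∧
      ∀ k, (Fin.cons i s : Fin (n + 1) → ι) k ∈ T) ↔
        i ∈ T ∧ (Function.Injective s ∧ ∀ k, s k ∈ T.erase i) := by
    simp only [Fin.cons_injective_iff, Fin.forall_fin_succ, Fin.cons_zero, Fin.cons_succ,
      mem_erase, Set.mem_range, not_exists, forall_and, ne_eq]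
    tauto
  rw [successiveProb, if_congr hcond rfl rfl]
  by_cases hi : i ∈ T
  · simp only [hi, true_and, if_true, successiveProb]
    split_ifs
    · simp only [Fin.prod_univ_succ, Fin.cons_zero, Fin.cons_succ, Fin.sum_Iio_succ_cons,
        weight_erase hi, sub_sub, Iio_eq_empty.2 fun b _ ↦ Fin.zero_le b, sum_empty, sub_zero]
    · simp
  · simp [hi]

lemma expectWithout_eq_sum [Fintype ι] (n : ℕ) (T : Finset ι) (a : ℝ) :
    expectWithout ω ν f n T a = ∑ t : Fin n → ι, successiveProb ω T t * f (a + ∑ k, ν (t k)) := by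
  induction n generalizing T a with
  | zero => simp [expectWithout, successiveProb, Function.injective_of_subsingleton]
  | succ n ih =>
    simp only [expectWithout, Fintype.sum_fin_succ_pi, successiveProb_cons, ite_mul, zero_mul,
      sum_ite_irrel, sum_const_zero, Fintype.sum_ite_mem]
    refine sum_congr rfl fun i _ ↦ ?_
    rw [ih, mul_sum]
    refine sum_congr rfl fun s _ ↦ ?_
    simp only [Fin.sum_univ_succ, Fin.cons_zero, Fin.cons_succ, add_assoc, mul_assoc]

end WeightedSampling

open WeightedSampling in
open scoped Classical in
/-- Weighted sampling without replacement is dominated by sampling with replacement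
in the increasing convex order, when weights and values are similarly ordered. -/
theorem weighted_sampling_increasing_convex_order
    (N n : ℕ) (hn : n ≤ N)
    (ω ν : Fin N → ℝ)
    (hω : ∀ i, 0 < ω i) (hsum : ∑ i, ω i = 1)
    (hmono : ∀ i j, ω i > ω j → ν i ≥ ν j)
    (f : ℝ → ℝ) (hconv : ConvexOn ℝ Set.univ f) (hmonof : Monotone f) :
    ∑ i ∈ Finset.univ.filter (fun i : Fin n → Fin N => Function.Injective i),
        (∏ k, ω (i k) / (1 - ∑ m ∈ Finset.Iio k, ω (i m))) * f (∑ k, ν (i k))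
      ≤ ∑ j : Fin n → Fin N, (∏ k, ω (j k)) * f (∑ k, ν (j k)) := by
  have hW : weight ω univ = 1 := hsum
  calc _ = expectWithout ω ν f n univ 0 := by
        rw [expectWithout_eq_sum, sum_filter]
        refine sum_congr rfl fun t _ ↦ ?_
        simp only [successiveProb, hW, mem_univ, implies_true, and_true, zero_add, ite_mul,
          zero_mul]
    _ ≤ expectWith ω ν f n univ 0 :=
        expectWithout_le_expectWith hω hmonof hconv (fun i j h ↦ hmono j i h)
          n (by simpa using hn) 0
    _ = _ := by simp only [expectWith_univ_eq_sum, hW, div_one, zero_add]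
end

section
/- Let (I₁,...,Iₙ) be a weighted sample without replacement from N items with weights ω(i), and suppose (J_k)_{k≥1} are i.i.d. with P(J₁=i)=ω(i), with I_k = J_{T_k} where T_k is the time of the k-th distinct item in (J_i). Define σ_{k-1} = ω(I₁)+...+ω(I_{k-1}) and τ_k = T_k - T_{k-1}. Then conditionally on (I₁,...,Iₙ), the inter-arrival times τ₁,...,τₙ are independent and τ_k is geometric with success parameter 1-σ_{k-1}; equivalently, for any distinct i₁,...,iₙ and t₁,...,tₙ ≥ 1, P(τ₁=t₁,...,τₙ=tₙ, (I₁,...,Iₙ)=(i₁,...,iₙ)) = [∏ₖ ω(iₖ)/(1-ω(i₁)-...-ω(i_{k-1}))] · ∏ₖ P(Gₖ=tₖ), where Gₖ is geometric with parameter 1-ω(i₁)-...-ω(i_{k-1}). -/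
/-!
Fix the targets `i` and `t` and put `S k = t 0 + ⋯ + t (k - 1)`. The event
`{τ_k = t_k, I_k = i_k for all k < n}` is a cylinder event: it holds iff every draw `J s` with
`s < S n` lies in a prescribed set, namely `{i k}` when `s = S (k + 1) - 1` is the last time of
the `k`-th block `[S k, S (k + 1))`, and the items `{i 0, …, i (k - 1)}` already seen at the
other times of that block. By independence its probability is the product over `s` of the
`ω`-mass of these sets, `∏ k, σ_k ^ (t k - 1) * ω (i k)` with
`σ_k = ω (i 0) + ⋯ + ω (i (k - 1))`, and this is the claimed product once the factors `1 - σ_k`,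
nonzero since `σ_k + ω (i k) ≤ 1`, cancel.
-/

open scoped BigOperators
open MeasureTheory ProbabilityTheory

/-- Number of distinct items appearing among the first `t` draws `J 0, …, J (t-1)`. -/
def numDistinct (N : ℕ) (J : ℕ → Fin N) (t : ℕ) : ℕ :=
  ((Finset.range t).image J).card

/-- `hitTime N J k` is the (1-indexed) time at which the `k`-th distinct item appears. -/
noncomputable def hitTime (N : ℕ) (J : ℕ → Fin N) (k : ℕ) : ℕ :=
  sInf {t | numDistinct N J t = k}

open Finset

section Blocks

variable {t : ℕ → ℕ}

def blockStart (t : ℕ → ℕ) (k : ℕ) : ℕ := ∑ m ∈ range k, t m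

@[simp] lemma blockStart_zero : blockStart t 0 = 0 := rfl

lemma blockStart_succ (k : ℕ) : blockStart t (k + 1) = blockStart t k + t k :=
  sum_range_succ t k

lemma blockStart_strictMono (ht : ∀ m, 0 < t m) : StrictMono (blockStart t) :=
  strictMono_nat_of_lt_succ fun k => by rw [blockStart_succ]; exact Nat.lt_add_of_pos_right (ht k)

lemma le_blockStart (ht : ∀ m, 0 < t m) (k : ℕ) : k ≤ blockStart t k :=
  (blockStart_strictMono ht).id_le k

def blockIndex (t : ℕ → ℕ) (s : ℕ) : ℕ :=
  Nat.findGreatest (fun k => blockStart t k ≤ s) s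

lemma gc_blockStart_blockIndex (ht : ∀ m, 0 < t m) :
    GaloisConnection (blockStart t) (blockIndex t) := fun k s =>
  ⟨fun h => Nat.le_findGreatest ((le_blockStart ht k).trans h) h,
   fun h => ((blockStart_strictMono ht).monotone h).trans
     (Nat.findGreatest_spec (P := fun k => blockStart t k ≤ s) (Nat.zero_le s) (Nat.zero_le s))⟩

lemma blockIndex_eq_iff (ht : ∀ m, 0 < t m) {s k : ℕ} :
    blockIndex t s = k ↔ blockStart t k ≤ s ∧ s < blockStart t (k + 1) := by
  rw [le_antisymm_iff, ← Nat.lt_add_one_iff, ← not_le,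
    ← (gc_blockStart_blockIndex ht).le_iff_le, ← (gc_blockStart_blockIndex ht).le_iff_le, not_le,
    and_comm]

lemma blockIndex_blockStart (ht : ∀ m, 0 < t m) (k : ℕ) : blockIndex t (blockStart t k) = k :=
  (blockIndex_eq_iff ht).2 ⟨le_rfl, blockStart_strictMono ht k.lt_succ_self⟩

lemma blockIndex_le (ht : ∀ m, 0 < t m) {s n : ℕ} (hs : s ≤ blockStart t n) :
    blockIndex t s ≤ n :=
  (gc_blockStart_blockIndex ht).monotone_u hs |>.trans (blockIndex_blockStart ht n).le

lemma blockIndex_succ_of_ne (ht : ∀ m, 0 < t m) {s : ℕ}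
    (h : s + 1 ≠ blockStart t (blockIndex t s + 1)) : blockIndex t (s + 1) = blockIndex t s := by
  obtain ⟨h₁, h₂⟩ := (blockIndex_eq_iff ht).1 (rfl : blockIndex t s = _)
  exact (blockIndex_eq_iff ht).2 ⟨by omega, by omega⟩

variable {α : Type*} [DecidableEq α]

def allowedDraws (t : ℕ → ℕ) (i : ℕ → α) (s : ℕ) : Finset α :=
  if s + 1 = blockStart t (blockIndex t s + 1) then {i (blockIndex t s)}
  else (range (blockIndex t s)).image i

variable {i : ℕ → α}

lemma allowedDraws_of_lt (ht : ∀ m, 0 < t m) {k s : ℕ} (h₁ : blockStart t k ≤ s)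
    (h₂ : s + 1 < blockStart t (k + 1)) : allowedDraws t i s = (range k).image i := by
  have hk : blockIndex t s = k := (blockIndex_eq_iff ht).2 ⟨h₁, by omega⟩
  rw [allowedDraws, hk, if_neg h₂.ne]

lemma allowedDraws_blockStart_succ_sub_one (ht : ∀ m, 0 < t m) (k : ℕ) :
    allowedDraws t i (blockStart t (k + 1) - 1) = {i k} := by
  have h := blockStart_succ (t := t) k
  have hk : blockIndex t (blockStart t (k + 1) - 1) = k :=
    (blockIndex_eq_iff ht).2 ⟨by have := ht k; omega, by have := ht k; omega⟩
  rw [allowedDraws, hk, if_pos (by have := ht k; omega)]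

lemma prod_sum_allowedDraws {R : Type*} [CommSemiring R] (ht : ∀ m, 0 < t m) (w : α → R) :
    ∀ {n : ℕ}, Set.InjOn i (Set.Iio n) →
      ∏ s ∈ range (blockStart t n), ∑ j ∈ allowedDraws t i s, w j
        = ∏ k ∈ range n, (∑ m ∈ range k, w (i m)) ^ (t k - 1) * w (i k)
  | 0, _ => by simp
  | n + 1, hi => by
    have hlast : blockStart t (n + 1) = blockStart t n + (t n - 1) + 1 := by
      rw [blockStart_succ]; have := ht n; omega
    have hinner : ∀ s ∈ Ico (blockStart t n) (blockStart t n + (t n - 1)),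
        ∑ j ∈ allowedDraws t i s, w j = ∑ m ∈ range n, w (i m) := fun s hs => by
      rw [mem_Ico] at hs
      rw [allowedDraws_of_lt ht hs.1 (by omega), sum_image]
      exact hi.mono (by simp [Set.Iio_subset_Iio n.le_succ])
    rw [← prod_range_mul_prod_Ico _ (blockStart_strictMono ht n.lt_succ_self).le,
      prod_range_succ, prod_sum_allowedDraws ht w (hi.mono (Set.Iio_subset_Iio n.le_succ)),
      hlast, prod_Ico_succ_top (by omega), prod_congr rfl hinner, prod_const, Nat.card_Ico,
      Nat.add_sub_cancel_left, show blockStart t n + (t n - 1) = blockStart t (n + 1) - 1 by omega,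
      allowedDraws_blockStart_succ_sub_one ht,
      sum_singleton]

end Blocks

section HitTimes

variable {N : ℕ} {J : ℕ → Fin N}

lemma numDistinct_mono : Monotone (numDistinct N J) := fun _ _ hab =>
  card_le_card (image_subset_image (range_subset_range.2 hab))

lemma image_range_succ (J : ℕ → Fin N) (s : ℕ) :
    (range (s + 1)).image J = insert (J s) ((range s).image J) := by
  rw [range_add_one, image_insert]

lemma hitTime_zero : hitTime N J 0 = 0 :=
  Nat.sInf_eq_zero.2 (Or.inl (by simp [numDistinct]))

lemma hitTime_eq_iff {k s : ℕ} (hks : k ≤ s) :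
    hitTime N J k = s ↔ IsLeast {r | numDistinct N J r = k} s := by
  refine ⟨fun h => ?_, IsLeast.csInf_eq⟩
  rcases Set.eq_empty_or_nonempty {r | numDistinct N J r = k} with he | hne
  · rw [hitTime, he, Nat.sInf_empty] at h
    have hk : k = 0 := by omega
    have h0 : 0 ∈ {r | numDistinct N J r = k} := by simp [numDistinct, hk]
    simp [he] at h0
  · exact h ▸ ⟨Nat.sInf_mem hne, fun r hr => Nat.sInf_le hr⟩

variable {t : ℕ → ℕ} {i : ℕ → Fin N} {n : ℕ}

lemma hitTime_eq_blockStart_iff (ht : ∀ m, 0 < t m) :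
    (∀ k ≤ n, hitTime N J k = blockStart t k) ↔
      ∀ s ≤ blockStart t n, numDistinct N J s = blockIndex t s := by
  have hmono := (blockStart_strictMono ht).monotone
  constructor
  · intro hT s hs
    have hleast : ∀ k ≤ n, numDistinct N J (blockStart t k) = k ∧
        ∀ r, numDistinct N J r = k → blockStart t k ≤ r := fun k hk =>
      (hitTime_eq_iff (le_blockStart ht k)).1 (hT k hk)
    obtain ⟨h₁, h₂⟩ := (blockIndex_eq_iff ht).1 (rfl : blockIndex t s = _)
    have hkn := blockIndex_le ht hs
    have hge : blockIndex t s ≤ numDistinct N J s :=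
      (hleast _ hkn).1.ge.trans (numDistinct_mono h₁)
    rcases hkn.lt_or_eq with hlt | heq
    · have hle : numDistinct N J s ≤ blockIndex t s + 1 :=
        (numDistinct_mono h₂.le).trans (hleast _ hlt).1.le
      have hne : numDistinct N J s ≠ blockIndex t s + 1 := fun h =>
        (hleast _ hlt).2 s h |>.not_gt h₂
      omega
    · rw [le_antisymm hs (heq ▸ h₁), blockIndex_blockStart ht]
      exact (hleast n le_rfl).1
  · intro hD k hk
    rw [hitTime_eq_iff (le_blockStart ht k)]
    refine ⟨(hD _ (hmono hk)).trans (blockIndex_blockStart ht k), fun r hr => ?_⟩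
    rcases le_or_gt r (blockStart t n) with hrn | hrn
    · exact (gc_blockStart_blockIndex ht).le_iff_le.2 (by rw [← hD r hrn, hr.out])
    · exact (hmono hk).trans hrn.le

lemma interarrival_iff_hitTime_eq_blockStart (ht : ∀ m, 0 < t m) :
    (∀ k < n, hitTime N J (k + 1) - hitTime N J k = t k ∧ J (hitTime N J (k + 1) - 1) = i k) ↔
      (∀ k ≤ n, hitTime N J k = blockStart t k) ∧
        ∀ k < n, J (blockStart t (k + 1) - 1) = i k := by
  constructor
  · intro h
    have hT : ∀ k ≤ n, hitTime N J k = blockStart t k := by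
      intro k
      induction k with
      | zero => exact fun _ => hitTime_zero
      | succ k ih =>
        intro hk
        have := (h k hk).1
        have := ih (by omega)
        have := ht k
        rw [blockStart_succ]
        omega
    exact ⟨hT, fun k hk => hT (k + 1) hk ▸ (h k hk).2⟩
  · rintro ⟨hT, hlast⟩ k hk
    rw [hT (k + 1) hk, hT k hk.le, blockStart_succ]
    exact ⟨by omega, blockStart_succ (t := t) k ▸ hlast k hk⟩

lemma card_image_range_blockIndex (ht : ∀ m, 0 < t m) (hi : Set.InjOn i (Set.Iio n)) {s : ℕ}
    (hs : s ≤ blockStart t n) : ((range (blockIndex t s)).image i).card = blockIndex t s := by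
  rw [card_image_of_injOn (hi.mono ?_), card_range]
  simpa using blockIndex_le ht hs

lemma image_range_eq_of_forall_mem_allowedDraws (ht : ∀ m, 0 < t m)
    (hJ : ∀ s < blockStart t n, J s ∈ allowedDraws t i s) :
    ∀ s ≤ blockStart t n, (range s).image J = (range (blockIndex t s)).image i := by
  intro s
  induction s with
  | zero => intro _; simpa using blockIndex_blockStart ht 0
  | succ s ih =>
    intro hs
    obtain ⟨h₁, h₂⟩ := (blockIndex_eq_iff ht).1 (rfl : blockIndex t s = _)
    rw [image_range_succ, ih (by omega)]
    by_cases hend : s + 1 = blockStart t (blockIndex t s + 1)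
    · have hJs := hJ s hs
      rw [allowedDraws, if_pos hend, mem_singleton] at hJs
      rw [hJs, hend, blockIndex_blockStart ht, range_add_one, image_insert]
    · have hJs := hJ s hs
      rw [allowedDraws_of_lt ht h₁ (by omega)] at hJs
      rw [blockIndex_succ_of_ne ht hend, insert_eq_of_mem hJs]

lemma image_range_eq_of_numDistinct_eq (ht : ∀ m, 0 < t m) (hi : Set.InjOn i (Set.Iio n))
    (hlast : ∀ k < n, J (blockStart t (k + 1) - 1) = i k) {s : ℕ} (hs : s ≤ blockStart t n)
    (hD : numDistinct N J s = blockIndex t s) :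
    (range s).image J = (range (blockIndex t s)).image i := by
  refine (eq_of_subset_of_card_le (fun j hj => ?_) ?_).symm
  · obtain ⟨m, hm, rfl⟩ := mem_image.1 hj
    rw [mem_range] at hm
    rw [← hlast m (hm.trans_le (blockIndex_le ht hs))]
    have hle : blockStart t (m + 1) ≤ s := (gc_blockStart_blockIndex ht).le_iff_le.2 hm
    have hpos := le_blockStart ht (m + 1)
    exact mem_image_of_mem J (mem_range.2 (by omega))
  · rw [← numDistinct, hD, card_image_range_blockIndex ht hi hs]

lemma mem_allowedDraws_of_image_range_eq (ht : ∀ m, 0 < t m)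
    (hlast : ∀ k < n, J (blockStart t (k + 1) - 1) = i k) {s : ℕ} (hs : s < blockStart t n)
    (h₀ : (range s).image J = (range (blockIndex t s)).image i)
    (h₁ : (range (s + 1)).image J = (range (blockIndex t (s + 1))).image i) :
    J s ∈ allowedDraws t i s := by
  obtain ⟨hk₁, hk₂⟩ := (blockIndex_eq_iff ht).1 (rfl : blockIndex t s = _)
  by_cases hend : s + 1 = blockStart t (blockIndex t s + 1)
  · have hkn : blockIndex t s < n :=
      lt_of_not_ge fun h => ((gc_blockStart_blockIndex ht).le_iff_le.2 h).not_gt hs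
    rw [allowedDraws, if_pos hend, mem_singleton]
    calc J s = J (blockStart t (blockIndex t s + 1) - 1) := congrArg J (by omega)
      _ = i (blockIndex t s) := hlast _ hkn
  · rw [allowedDraws_of_lt ht hk₁ (by omega), ← h₀]
    rw [image_range_succ, blockIndex_succ_of_ne ht hend, ← h₀] at h₁
    exact h₁ ▸ mem_insert_self _ _

lemma forall_mem_allowedDraws_iff (ht : ∀ m, 0 < t m) (hi : Set.InjOn i (Set.Iio n)) :
    (∀ s < blockStart t n, J s ∈ allowedDraws t i s) ↔
      (∀ s ≤ blockStart t n, numDistinct N J s = blockIndex t s) ∧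
        ∀ k < n, J (blockStart t (k + 1) - 1) = i k := by
  constructor
  · intro hJ
    have himage := image_range_eq_of_forall_mem_allowedDraws ht hJ
    refine ⟨fun s hs => ?_, fun k hk => ?_⟩
    · rw [numDistinct, himage s hs, card_image_range_blockIndex ht hi hs]
    · have hle := (blockStart_strictMono ht).monotone (show k + 1 ≤ n from hk)
      have hpos := le_blockStart ht (k + 1)
      simpa [allowedDraws_blockStart_succ_sub_one ht] using hJ (blockStart t (k + 1) - 1) (by omega)
  · rintro ⟨hD, hlast⟩ s hs
    exact mem_allowedDraws_of_image_range_eq ht hlast hs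
      (image_range_eq_of_numDistinct_eq ht hi hlast hs.le (hD s hs.le))
      (image_range_eq_of_numDistinct_eq ht hi hlast hs (hD (s + 1) hs))

lemma interarrival_iff_forall_mem_allowedDraws (ht : ∀ m, 0 < t m)
    (hi : Set.InjOn i (Set.Iio n)) :
    (∀ k < n, hitTime N J (k + 1) - hitTime N J k = t k ∧ J (hitTime N J (k + 1) - 1) = i k) ↔
      ∀ s < blockStart t n, J s ∈ allowedDraws t i s := by
  rw [interarrival_iff_hitTime_eq_blockStart ht, hitTime_eq_blockStart_iff ht,
    forall_mem_allowedDraws_iff ht hi]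

end HitTimes

section Probability

variable {Ω : Type*} [MeasurableSpace Ω] {μ : Measure Ω}

lemma measure_preimage_finset_eq_ofReal_sum {α : Type*} [MeasurableSpace α]
    [MeasurableSingletonClass α] {f : Ω → α} (hf : Measurable f) {w : α → ℝ}
    (hw : ∀ a, 0 ≤ w a)
    (hlaw : ∀ a, μ {x | f x = a} = ENNReal.ofReal (w a)) (B : Finset α) :
    μ (f ⁻¹' B) = ENNReal.ofReal (∑ a ∈ B, w a) := by
  rw [← sum_measure_preimage_singleton B fun a _ => hf (measurableSet_singleton a),
    ENNReal.ofReal_sum_of_nonneg fun a _ => hw a]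
  exact sum_congr rfl fun a _ => hlaw a

theorem measure_interarrival_eq {N n : ℕ} {ω : Fin N → ℝ} (hω : ∀ j, 0 ≤ ω j)
    {J : ℕ → Ω → Fin N} (hJ : ∀ s, Measurable (J s)) (hindep : iIndepFun J μ)
    (hlaw : ∀ s j, μ {x | J s x = j} = ENNReal.ofReal (ω j))
    {t : ℕ → ℕ} (ht : ∀ m, 0 < t m) {i : ℕ → Fin N} (hi : Set.InjOn i (Set.Iio n)) :
    μ {x | ∀ k < n,
        hitTime N (fun s => J s x) (k + 1) - hitTime N (fun s => J s x) k = t k ∧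
        J (hitTime N (fun s => J s x) (k + 1) - 1) x = i k}
      = ENNReal.ofReal
          (∏ k ∈ range n, (∑ m ∈ range k, ω (i m)) ^ (t k - 1) * ω (i k)) := by
  have hcylinder : {x | ∀ k < n,
        hitTime N (fun s => J s x) (k + 1) - hitTime N (fun s => J s x) k = t k ∧
        J (hitTime N (fun s => J s x) (k + 1) - 1) x = i k}
      = ⋂ s ∈ range (blockStart t n), J s ⁻¹' allowedDraws t i s := by
    ext x
    simpa using interarrival_iff_forall_mem_allowedDraws (J := fun s => J s x) ht hi
  rw [hcylinder,
    hindep.measure_inter_preimage_eq_mul _ fun s _ => (allowedDraws t i s).measurableSet,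
    prod_congr rfl fun s _ => measure_preimage_finset_eq_ofReal_sum (hJ s) hω (hlaw s) _,
    ← ENNReal.ofReal_prod_of_nonneg fun s _ => sum_nonneg fun j _ => hω j,
    prod_sum_allowedDraws ht ω hi]

end Probability

lemma sum_comp_lt_one_of_notMem {ι α : Type*} [DecidableEq ι] [DecidableEq α] [Fintype α]
    {w : α → ℝ} (hw : ∀ a, 0 < w a) (hsum : ∑ a, w a = 1) {f : ι → α}
    (hf : Function.Injective f) {s : Finset ι} {k : ι} (hk : k ∉ s) :
    ∑ m ∈ s, w (f m) < 1 :=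
  calc ∑ m ∈ s, w (f m) < ∑ m ∈ insert k s, w (f m) := by
        rw [sum_insert hk]; linarith [hw (f k)]
    _ = ∑ a ∈ (insert k s).image f, w a := (sum_image hf.injOn).symm
    _ ≤ ∑ a, w a := sum_le_univ_sum_of_nonneg fun a => (hw a).le
    _ = 1 := hsum

theorem measure_interarrival_eq_fin {Ω : Type*} [MeasurableSpace Ω] {μ : Measure Ω}
    {N n : ℕ} {ω : Fin N → ℝ} (hω : ∀ j, 0 ≤ ω j) {J : ℕ → Ω → Fin N}
    (hJ : ∀ s, Measurable (J s)) (hindep : iIndepFun J μ)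
    (hlaw : ∀ s j, μ {x | J s x = j} = ENNReal.ofReal (ω j))
    {t : Fin n → ℕ} (ht : ∀ k, 0 < t k) {i : Fin n → Fin N} (hi : Function.Injective i) :
    μ {x | ∀ k : Fin n,
        hitTime N (fun s => J s x) ((k : ℕ) + 1) - hitTime N (fun s => J s x) (k : ℕ) = t k ∧
        J (hitTime N (fun s => J s x) ((k : ℕ) + 1) - 1) x = i k}
      = ENNReal.ofReal (∏ k, (∑ m ∈ Iio k, ω (i m)) ^ (t k - 1) * ω (i k)) := by
  rcases n with _ | n
  · have := hindep.isProbabilityMeasure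
    simp
  set t' : ℕ → ℕ := fun m => if h : m < n + 1 then t ⟨m, h⟩ else 1
  set i' : ℕ → Fin N := fun m => if h : m < n + 1 then i ⟨m, h⟩ else i 0
  have ht' : ∀ m, 0 < t' m := fun m => by
    dsimp only [t']
    split_ifs
    exacts [ht _, one_pos]
  have ht'_val (k : Fin (n + 1)) : t' k = t k := dif_pos k.isLt
  have hi'_val (k : Fin (n + 1)) : i' k = i k := dif_pos k.isLt
  have hi' : Set.InjOn i' (Set.Iio (n + 1)) := fun a ha b hb hab => by
    rw [← Fin.val_mk ha, ← Fin.val_mk hb, hi'_val, hi'_val] at hab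
    exact Fin.mk.inj_iff.1 (hi hab)
  have hσ (k : Fin (n + 1)) : ∑ m ∈ Iio k, ω (i m) = ∑ m ∈ range k, ω (i' m) := by
    rw [← Nat.Iio_eq_range, ← Fin.map_valEmbedding_Iio, sum_map]
    simp only [Fin.valEmbedding_apply, hi'_val]
  convert measure_interarrival_eq hω hJ hindep hlaw ht' hi' using 2
  · ext x
    exact Fin.forall_iff.trans <| forall₂_congr fun k hk => by
      rw [(ht'_val ⟨k, hk⟩ : t' k = _), (hi'_val ⟨k, hk⟩ : i' k = _)]
  · rw [← Fin.prod_univ_eq_prod_range]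
    simp only [ht'_val, hi'_val, hσ]

theorem geometric_interarrival_general
    {Ω : Type*} [MeasurableSpace Ω] (μ : Measure Ω)
    (N n : ℕ) (ω : Fin N → ℝ)
    (hω : ∀ i, 0 < ω i) (hsum : ∑ i, ω i = 1)
    (J : ℕ → Ω → Fin N) (hJmeas : ∀ t, Measurable (J t))
    (hindep : iIndepFun J μ)
    (hlaw : ∀ t i, μ {x | J t x = i} = ENNReal.ofReal (ω i))
    (i : Fin n → Fin N) (hi : Function.Injective i)
    (t : Fin n → ℕ) (ht : ∀ k, 1 ≤ t k) :
    μ {x | ∀ k : Fin n,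
        hitTime N (fun s => J s x) ((k : ℕ) + 1) - hitTime N (fun s => J s x) (k : ℕ) = t k ∧
        J (hitTime N (fun s => J s x) ((k : ℕ) + 1) - 1) x = i k}
      = ENNReal.ofReal
        ((∏ k, ω (i k) / (1 - ∑ m ∈ Finset.Iio k, ω (i m))) *
          ∏ k, ((1 - ∑ m ∈ Finset.Iio k, ω (i m)) *
            (∑ m ∈ Finset.Iio k, ω (i m)) ^ (t k - 1))) := by
  rw [measure_interarrival_eq_fin (fun j => (hω j).le) hJmeas hindep hlaw ht hi,
    ← prod_mul_distrib]
  congr 1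
  refine prod_congr rfl fun k _ => ?_
  have hσ : 1 - ∑ m ∈ Iio k, ω (i m) ≠ 0 :=
    (sub_pos.2 (sum_comp_lt_one_of_notMem hω hsum hi (k := k) (by simp))).ne'
  field_simp

/-- The geometric inter-arrival lemma: conditionally on the sample without replacement
`(I₁,…,Iₙ)`, the inter-arrival times `τ_k = T_k - T_{k-1}` are independent geometric
variables with parameters `1 - σ_{k-1}`; stated as the joint probability identity. -/
theorem geometric_interarrival
    {Ω : Type*} [MeasurableSpace Ω] (μ : Measure Ω) [IsProbabilityMeasure μ]
    (N n : ℕ) (hn : n ≤ N) (ω : Fin N → ℝ)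
    (hω : ∀ i, 0 < ω i) (hsum : ∑ i, ω i = 1)
    (J : ℕ → Ω → Fin N) (hJmeas : ∀ t, Measurable (J t))
    (hindep : iIndepFun J μ)
    (hlaw : ∀ t i, μ {x | J t x = i} = ENNReal.ofReal (ω i))
    (i : Fin n → Fin N) (hi : Function.Injective i)
    (t : Fin n → ℕ) (ht : ∀ k, 1 ≤ t k) :
    μ {x | ∀ k : Fin n,
        hitTime N (fun s => J s x) ((k : ℕ) + 1) - hitTime N (fun s => J s x) (k : ℕ) = t k ∧
        J (hitTime N (fun s => J s x) ((k : ℕ) + 1) - 1) x = i k}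
      = ENNReal.ofReal
        ((∏ k, ω (i k) / (1 - ∑ m ∈ Finset.Iio k, ω (i m))) *
          ∏ k, ((1 - ∑ m ∈ Finset.Iio k, ω (i m)) *
            (∑ m ∈ Finset.Iio k, ω (i m)) ^ (t k - 1))) :=
  geometric_interarrival_general μ N n ω hω hsum J hJmeas hindep hlaw i hi t ht
end

section
/- Let (i₁,...,iₙ) be distinct indices with weights ω(i) > 0, and for a permutation π of {1,...,n} define p(π) = ∏_{m=1}^{n} ω(i_{π(m)}) / (1 - ω(i_{π(1)}) - ... - ω(i_{π(m-1)})). Fix k ≠ ℓ with ω(i_k) ≥ ω(i_ℓ). For each permutation π with π(1) = k, let π* be the permutation obtained from π by swapping the positions of k and ℓ (so π*(1) = ℓ, π*(π^{-1}(ℓ)) = k, and π*(j)=π(j) elsewhere). Then p(π) ≥ p(π*). -/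
/-!
Since `π` starts with `k`, the ordering `π*` is `π` composed with the swap of the first position
with the position of `ℓ`: it moves the larger weight `ω(i k)` from the front to a later position.
The numerators of `p(π)` and `p(π*)` are the same weights in a different order, while every prefix
sum of weights drawn under `π*` is at most the corresponding one under `π`.
Hence each denominator `1 - (prefix sum)` can only grow, and `p(π*) ≤ p(π)`.
-/

open Finset

/-- The paper's `p(π)` is `successiveSamplingProb (ω ∘ i ∘ π)`. -/
noncomputable def successiveSamplingProb {ι : Type*} [Fintype ι] [LinearOrder ι]
    [LocallyFiniteOrderBot ι] (w : ι → ℝ) : ℝ :=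
  ∏ m, w m / (1 - ∑ m' ∈ Iio m, w m')

section SwapPrefixSums

variable {ι M : Type*} [LinearOrder ι] [LocallyFiniteOrderBot ι]
  [AddCommMonoid M] [PartialOrder M] [IsOrderedAddMonoid M]

theorem sum_Iio_comp_swap_le {f : ι → M} {a b : ι} (hab : a ≤ b) (hf : f b ≤ f a) (m : ι) :
    ∑ x ∈ Iio m, f (Equiv.swap a b x) ≤ ∑ x ∈ Iio m, f x := by
  rcases lt_or_ge b m with hbm | hmb
  · refine (Equiv.Perm.sum_comp _ _ f fun x hmoved => ?_).le
    have hx : x = a ∨ x = b := by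
      by_contra! h
      exact hmoved (Equiv.swap_apply_of_ne_of_ne h.1 h.2)
    rcases hx with rfl | rfl <;> simp [hab.trans_lt hbm, hbm]
  · refine sum_le_sum fun x hx => ?_
    have hxb : x ≠ b := (mem_Iio.mp hx).trans_le hmb |>.ne
    rw [Equiv.swap_apply_def, if_neg hxb]
    split_ifs with hxa
    · rwa [hxa]
    · exact le_rfl

end SwapPrefixSums

theorem successiveSamplingProb_comp_swap_le {ι : Type*} [Fintype ι] [LinearOrder ι]
    [LocallyFiniteOrderBot ι] {w : ι → ℝ} (hw : ∀ m, 0 ≤ w m) (hsum : ∑ m, w m < 1)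
    {a b : ι} (hab : a ≤ b) (hwab : w b ≤ w a) :
    successiveSamplingProb (w ∘ Equiv.swap a b) ≤ successiveSamplingProb w := by
  have hdenom_pos : ∀ m, 0 < 1 - ∑ m' ∈ Iio m, w m' := fun m =>
    sub_pos.mpr <| (sum_le_sum_of_subset_of_nonneg (subset_univ _) fun x _ _ => hw x).trans_lt hsum
  unfold successiveSamplingProb
  rw [prod_div_distrib, prod_div_distrib, Function.comp_def, Equiv.prod_comp]
  refine div_le_div_of_nonneg_left (prod_nonneg fun m _ => hw m)
    (prod_pos fun m _ => hdenom_pos m) (prod_le_prod (fun m _ => (hdenom_pos m).le) fun m _ => ?_)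
  linarith [sum_Iio_comp_swap_le hab hwab m]

theorem successive_sampling_swap_ineq_general
    (N n : ℕ) (ω : Fin N → ℝ) (hω : ∀ i, 0 < ω i)
    (i : Fin n → Fin N)
    (hpartial : ∑ m, ω (i m) < 1)
    (k ℓ : Fin n) (hωkl : ω (i k) ≥ ω (i ℓ))
    (π : Equiv.Perm (Fin n)) (hn : 0 < n) (hπ : π ⟨0, hn⟩ = k) :
    (∏ m, ω (i (π m)) / (1 - ∑ m' ∈ Finset.Iio m, ω (i (π m'))))
      ≥ ∏ m, ω (i ((Equiv.swap k ℓ * π) m)) /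
          (1 - ∑ m' ∈ Finset.Iio m, ω (i ((Equiv.swap k ℓ * π) m'))) := by
  have hπk : π⁻¹ k = ⟨0, hn⟩ := by simp [← hπ]
  rw [Equiv.swap_mul_eq_mul_swap, hπk]
  refine successiveSamplingProb_comp_swap_le (w := fun m => ω (i (π m))) (fun m => (hω _).le)
    ?_ (Fin.le_def.mpr (Nat.zero_le _)) ?_
  · rwa [Equiv.sum_comp π fun m => ω (i m)]
  · simpa [hπ] using hωkl

/-- The swap comparison for successive-sampling probabilities of orderings:
if `ω(i k) ≥ ω(i ℓ)` and `π(1) = k`, then `p(π) ≥ p(π*)`, where `π*` swaps the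
positions of `k` and `ℓ` in `π`. -/
theorem successive_sampling_swap_ineq
    (N n : ℕ) (ω : Fin N → ℝ) (hω : ∀ i, 0 < ω i)
    (i : Fin n → Fin N) (hi : Function.Injective i)
    (hpartial : ∑ m, ω (i m) < 1)
    (k ℓ : Fin n) (hkl : k ≠ ℓ) (hωkl : ω (i k) ≥ ω (i ℓ))
    (π : Equiv.Perm (Fin n)) (hn : 0 < n) (hπ : π ⟨0, hn⟩ = k) :
    (∏ m, ω (i (π m)) / (1 - ∑ m' ∈ Finset.Iio m, ω (i (π m'))))
      ≥ ∏ m, ω (i ((Equiv.swap k ℓ * π) m)) /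
          (1 - ∑ m' ∈ Finset.Iio m, ω (i ((Equiv.swap k ℓ * π) m'))) :=
  successive_sampling_swap_ineq_general N n ω hω i hpartial k ℓ hωkl π hn hπ
end

section
/- Let X be a random variable such that for all λ > 0, λE[X e^{λX}] - E[e^{λX}] log E[e^{λX}] ≤ (λ²v/2) E[e^{λX}] for some constant v > 0. Then for all λ > 0, log E[e^{λ(X - E[X])}] ≤ λ²v/2, and consequently for all t > 0, P(X - E[X] > t) ≤ exp(-t²/(2v)). -/
/-!
Write `Λ(λ) = log E[e^{λX}]` for the cumulant generating function. Dividing the entropy inequality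
by `E[e^{λX}]` turns it into `λ Λ'(λ) - Λ(λ) ≤ λ² v / 2`, i.e. `(Λ(λ)/λ - v λ / 2)' ≤ 0`. Hence
`Λ(λ)/λ - v λ/2` is antitone on `(0, ∞)` and bounded by its limit `Λ'(0) = E[X]` at `0⁺`, which is
the sub-Gaussian bound `Λ(λ) ≤ λ E[X] + λ² v / 2`. Chernoff's bound at `λ = t / v` gives the tail.
-/

open MeasureTheory ProbabilityTheory Filter Set Topology Real

section Herbst

variable {g g' : ℝ → ℝ} {v : ℝ}

lemma antitoneOn_div_sub_mul_of_mul_deriv_sub_le (hg : ∀ l, 0 < l → HasDerivAt g (g' l) l)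
    (h : ∀ l, 0 < l → l * g' l - g l ≤ l ^ 2 * v / 2) :
    AntitoneOn (fun l ↦ g l / l - v / 2 * l) (Ioi 0) := by
  have hψ : ∀ l, 0 < l → HasDerivAt (fun l ↦ g l / l - v / 2 * l)
      ((g' l * l - g l * 1) / l ^ 2 - v / 2 * 1) l := fun l hl ↦
    ((hg l hl).div (hasDerivAt_id l) hl.ne').sub ((hasDerivAt_id l).const_mul (v / 2))
  refine antitoneOn_of_hasDerivWithinAt_nonpos (convex_Ioi 0)
    (f' := fun l ↦ (g' l * l - g l * 1) / l ^ 2 - v / 2 * 1)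
    (fun l hl ↦ (hψ l hl).continuousAt.continuousWithinAt) (fun l hl ↦ ?_) (fun l hl ↦ ?_)
  · rw [interior_Ioi] at hl ⊢
    exact (hψ l hl).hasDerivWithinAt
  · rw [interior_Ioi, mem_Ioi] at hl
    rw [sub_nonpos, div_le_iff₀ (by positivity)]
    linarith [h l hl]

lemma tendsto_div_nhdsGT_zero_of_hasDerivAt {d : ℝ} (hg : HasDerivAt g d 0) (h0 : g 0 = 0) :
    Tendsto (fun l ↦ g l / l) (𝓝[>] 0) (𝓝 d) := by
  simpa [h0, div_eq_inv_mul] using hg.tendsto_slope_zero_right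

theorem le_mul_deriv_zero_add_of_mul_deriv_sub_le (hg : ∀ l, 0 ≤ l → HasDerivAt g (g' l) l)
    (h0 : g 0 = 0) (h : ∀ l, 0 < l → l * g' l - g l ≤ l ^ 2 * v / 2) {l : ℝ} (hl : 0 < l) :
    g l ≤ l * g' 0 + l ^ 2 * v / 2 := by
  have hanti := antitoneOn_div_sub_mul_of_mul_deriv_sub_le (fun l hl ↦ hg l hl.le) h
  have hlim : Tendsto (fun l ↦ g l / l - v / 2 * l) (𝓝[>] 0) (𝓝 (g' 0 - v / 2 * 0)) :=
    (tendsto_div_nhdsGT_zero_of_hasDerivAt (hg 0 le_rfl) h0).sub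
      ((continuous_const_mul _).tendsto 0 |>.mono_left nhdsWithin_le_nhds)
  have hbound : g l / l - v / 2 * l ≤ g' 0 := by
    refine ge_of_tendsto (by simpa using hlim) ?_
    filter_upwards [Ioo_mem_nhdsGT hl] with a ha
    exact hanti ha.1 (mem_Ioi.2 hl) ha.2.le
  have : g l / l ≤ g' 0 + v / 2 * l := by linarith
  calc g l = g l / l * l := (div_mul_cancel₀ _ hl.ne').symm
    _ ≤ (g' 0 + v / 2 * l) * l := by gcongr
    _ = l * g' 0 + l ^ 2 * v / 2 := by ring

end Herbst

section CGF

variable {Ω : Type*} [MeasurableSpace Ω] {μ : Measure Ω} {X : Ω → ℝ} {t v : ℝ}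

lemma hasDerivAt_cgf [NeZero μ] (h : t ∈ interior (integrableExpSet X μ)) :
    HasDerivAt (cgf X μ) (μ[fun ω ↦ X ω * exp (t * X ω)] / mgf X μ t) t := by
  have ht : t ∈ integrableExpSet X μ := interior_subset h
  exact (hasDerivAt_mgf h).log (mgf_pos' (NeZero.ne μ) ht).ne'

lemma integrable_exp_mul_sub_const (h : Integrable (fun ω ↦ exp (t * X ω)) μ) (c : ℝ) :
    Integrable (fun ω ↦ exp (t * (X ω - c))) μ := by
  simp_rw [mul_sub, exp_sub]
  exact h.div_const _

lemma cgf_sub_const [NeZero μ] (h : Integrable (fun ω ↦ exp (t * X ω)) μ) (c : ℝ) :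
    cgf (fun ω ↦ X ω - c) μ t = cgf X μ t - t * c := by
  simp_rw [cgf, sub_eq_add_neg, mgf_add_const,
    log_mul (mgf_pos' (NeZero.ne μ) h).ne' (exp_pos _).ne', log_exp, mul_neg]

theorem cgf_le_of_entropy_le [IsProbabilityMeasure μ]
    (hint : ∀ l, Integrable (fun ω ↦ exp (l * X ω)) μ)
    (hent : ∀ l, 0 < l → l * μ[fun ω ↦ X ω * exp (l * X ω)] - mgf X μ l * log (mgf X μ l)
      ≤ l ^ 2 * v / 2 * mgf X μ l) {l : ℝ} (hl : 0 < l) :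
    cgf X μ l ≤ l * μ[X] + l ^ 2 * v / 2 := by
  have hexp : integrableExpSet X μ = univ := eq_univ_of_forall hint
  have hderiv : ∀ l, HasDerivAt (cgf X μ) (μ[fun ω ↦ X ω * exp (l * X ω)] / mgf X μ l) l :=
    fun l ↦ hasDerivAt_cgf (by simp [hexp])
  have hdiv : ∀ l, 0 < l →
      l * (μ[fun ω ↦ X ω * exp (l * X ω)] / mgf X μ l) - cgf X μ l ≤ l ^ 2 * v / 2 := by
    intro l hl
    have hM : 0 < mgf X μ l := mgf_pos (hint l)
    rw [cgf, mul_div_assoc', div_sub' hM.ne', div_le_iff₀ hM]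
    linarith [hent l hl]
  simpa using le_mul_deriv_zero_add_of_mul_deriv_sub_le (fun l _ ↦ hderiv l) cgf_zero hdiv hl

theorem measureReal_ge_le_exp_of_cgf_le [IsFiniteMeasure μ] (hv : 0 < v)
    (hint : ∀ l, 0 < l → Integrable (fun ω ↦ exp (l * X ω)) μ)
    (hcgf : ∀ l, 0 < l → cgf X μ l ≤ l ^ 2 * v / 2) (ht : 0 < t) :
    μ.real {ω | t ≤ X ω} ≤ exp (-t ^ 2 / (2 * v)) :=
  calc μ.real {ω | t ≤ X ω}
    _ ≤ exp (-(t / v) * t + cgf X μ (t / v)) :=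
      measure_ge_le_exp_cgf t (by positivity) (hint _ (by positivity))
    _ ≤ exp (-(t / v) * t + (t / v) ^ 2 * v / 2) := by
      gcongr
      exact hcgf _ (by positivity)
    _ = exp (-t ^ 2 / (2 * v)) := by congr 1; field

end CGF

/-- Herbst's argument: an entropy inequality for the moment generating function implies
a sub-Gaussian bound on the log-Laplace transform and a Gaussian upper-tail bound. -/
theorem herbst_argument
    {Ω : Type*} [MeasurableSpace Ω] (μ : Measure Ω) [IsProbabilityMeasure μ]
    (X : Ω → ℝ) (hX : Measurable X) (C : ℝ) (hC : ∀ x, |X x| ≤ C)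
    (v : ℝ) (hv : 0 < v)
    (hent : ∀ l : ℝ, 0 < l →
      l * ∫ x, X x * Real.exp (l * X x) ∂μ
        - (∫ x, Real.exp (l * X x) ∂μ) * Real.log (∫ x, Real.exp (l * X x) ∂μ)
      ≤ l ^ 2 * v / 2 * ∫ x, Real.exp (l * X x) ∂μ) :
    (∀ l : ℝ, 0 < l →
        Real.log (∫ x, Real.exp (l * (X x - ∫ y, X y ∂μ)) ∂μ) ≤ l ^ 2 * v / 2) ∧
    (∀ t : ℝ, 0 < t →
        (μ {x | X x - ∫ y, X y ∂μ > t}).toReal ≤ Real.exp (-t ^ 2 / (2 * v))) := by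
  have hint : ∀ l, Integrable (fun x ↦ exp (l * X x)) μ := fun l ↦
    integrable_exp_mul_of_mem_Icc hX.aemeasurable (ae_of_all _ fun x ↦ abs_le.1 (hC x))
  have hcentered : ∀ l, 0 < l → cgf (fun x ↦ X x - ∫ y, X y ∂μ) μ l ≤ l ^ 2 * v / 2 := by
    intro l hl
    rw [cgf_sub_const (hint l)]
    linarith [cgf_le_of_entropy_le hint hent hl]
  refine ⟨hcentered, fun t ht ↦ ?_⟩
  calc (μ {x | X x - ∫ y, X y ∂μ > t}).toReal
    _ ≤ μ.real {x | t ≤ X x - ∫ y, X y ∂μ} := measureReal_mono fun _ ↦ le_of_lt (α := ℝ)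
    _ ≤ exp (-t ^ 2 / (2 * v)) := measureReal_ge_le_exp_of_cgf_le hv
      (fun l _ ↦ integrable_exp_mul_sub_const (hint l) _) hcentered ht
end

section
/- Under the coupling where (I₁,...,Iₙ) are the first n distinct values of i.i.d. draws (J_k) with weights ω, let α = min ω / max ω < 1 and σₙ = ω(I₁)+...+ω(Iₙ). Then A := (1-σₙ) E[Tₙ | I₁,...,Iₙ] satisfies A ≤ (1/α)(N-n) log(N/(N-n)) almost surely, and also A ≤ n. -/
/-!
Write `s = {i₁, …, iₖ}` for the first `k` sampled items. The complement of `s` carries mass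
`1 - σₖ`, and it has `N - k` elements, each of weight between `min ω` and `max ω`. Hence each term
`(1 - σₙ) / (1 - σₖ)` of `A` is at most `1`, and at most `(1/α) (N - n) / (N - k)`. Summing the
second bound over `k < n` and comparing `∑_{k<n} 1 / (N - k)` with `log (N / (N - n))` gives the
first estimate; summing the first bound gives `A ≤ n`.
-/

open Finset

lemma one_div_le_log_div_sub_one {y : ℝ} (hy : 1 < y) : 1 / y ≤ Real.log (y / (y - 1)) := by
  have h := Real.one_sub_inv_le_log_of_pos (x := y / (y - 1)) (by apply div_pos <;> linarith)
  have hy' : y - 1 ≠ 0 := by linarith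
  convert h using 1
  field_simp
  ring

lemma sum_range_one_div_sub_le_log {x : ℝ} {n : ℕ} (hn : (n : ℝ) < x) :
    ∑ k ∈ range n, 1 / (x - k) ≤ Real.log (x / (x - n)) := by
  induction n with
  | zero => simp
  | succ n ih =>
    push_cast at hn ⊢
    have hxn : x - n ≠ 0 := by linarith
    have hxn1 : x - (n + 1) ≠ 0 := by linarith
    have hxn1' : x - n - 1 ≠ 0 := by linarith
    have hlog : Real.log (x / (x - (n + 1)))
        = Real.log (x / (x - n)) + Real.log ((x - n) / (x - n - 1)) := by
      rw [← Real.log_mul (by apply div_ne_zero <;> linarith) (by apply div_ne_zero <;> linarith)]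
      congr 1
      field_simp
      ring
    rw [sum_range_succ, hlog]
    gcongr
    · exact ih (by linarith)
    · exact one_div_le_log_div_sub_one (by linarith)

section Weights

variable {ι : Type*} [Fintype ι] [DecidableEq ι] {w : ι → ℝ}

lemma one_sub_sum_eq_sum_compl (hw : ∑ i, w i = 1) (s : Finset ι) :
    1 - ∑ i ∈ s, w i = ∑ i ∈ sᶜ, w i := by
  rw [← hw, ← sum_add_sum_compl s w]
  ring

lemma iInf_mul_card_compl_le_one_sub_sum (hw : ∑ i, w i = 1) (s : Finset ι) :
    (⨅ i, w i) * sᶜ.card ≤ 1 - ∑ i ∈ s, w i := by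
  rw [one_sub_sum_eq_sum_compl hw, mul_comm, ← nsmul_eq_mul]
  exact card_nsmul_le_sum _ _ _ fun i _ ↦ ciInf_le (Finite.bddBelow_range w) i

lemma one_sub_sum_le_iSup_mul_card_compl (hw : ∑ i, w i = 1) (s : Finset ι) :
    1 - ∑ i ∈ s, w i ≤ (⨆ i, w i) * sᶜ.card := by
  rw [one_sub_sum_eq_sum_compl hw, mul_comm, ← nsmul_eq_mul]
  exact sum_le_card_nsmul _ _ _ fun i _ ↦ le_ciSup (Finite.bddAbove_range w) i

lemma one_sub_sum_pos (hpos : ∀ i, 0 < w i) (hw : ∑ i, w i = 1) {s : Finset ι}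
    (hs : sᶜ.Nonempty) : 0 < 1 - ∑ i ∈ s, w i := by
  rw [one_sub_sum_eq_sum_compl hw]
  exact sum_pos (fun i _ ↦ hpos i) hs

lemma one_sub_sum_div_one_sub_sum_le_one (hpos : ∀ i, 0 < w i) (hw : ∑ i, w i = 1)
    {s t : Finset ι} (hst : s ⊆ t) (hs : sᶜ.Nonempty) :
    (1 - ∑ i ∈ t, w i) / (1 - ∑ i ∈ s, w i) ≤ 1 := by
  rw [div_le_one (one_sub_sum_pos hpos hw hs)]
  have := sum_le_sum_of_subset_of_nonneg hst fun i _ _ ↦ (hpos i).le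
  linarith

lemma one_sub_sum_div_one_sub_sum_le (hpos : ∀ i, 0 < w i) (hw : ∑ i, w i = 1)
    {s : Finset ι} (hs : sᶜ.Nonempty) (t : Finset ι) :
    (1 - ∑ i ∈ t, w i) / (1 - ∑ i ∈ s, w i)
      ≤ (⨆ i, w i) / (⨅ i, w i) * ((tᶜ.card : ℝ) / sᶜ.card) := by
  have : Nonempty ι := ⟨hs.choose⟩
  obtain ⟨j, hj⟩ := exists_eq_ciInf_of_finite (f := w)
  have hinf : 0 < ⨅ i, w i := hj ▸ hpos j
  rw [← mul_div_mul_comm]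
  exact div_le_div₀ (by positivity [Real.iSup_nonneg fun i ↦ (hpos i).le])
    (one_sub_sum_le_iSup_mul_card_compl hw t) (by positivity [card_pos.mpr hs])
    (iInf_mul_card_compl_le_one_sub_sum hw s)

end Weights

section Sample

variable {κ ι : Type*} [Fintype ι] [DecidableEq ι] {w : ι → ℝ} {f : κ → ι}

lemma cast_card_compl_image (hf : f.Injective) (s : Finset κ) :
    ((s.image f)ᶜ.card : ℝ) = Fintype.card ι - s.card := by
  have h := card_compl_add_card (s.image f)
  rw [card_image_of_injective s hf] at h
  rw [← h]
  push_cast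
  ring

lemma nonempty_compl_image (hf : f.Injective) {s : Finset κ} (hs : s.card < Fintype.card ι) :
    (s.image f)ᶜ.Nonempty := by
  rw [← card_pos, card_compl, card_image_of_injective s hf]
  omega

lemma one_sub_sum_comp_div_le_one (hpos : ∀ i, 0 < w i) (hw : ∑ i, w i = 1)
    (hf : f.Injective) {s t : Finset κ} (hst : s ⊆ t) (hs : s.card < Fintype.card ι) :
    (1 - ∑ m ∈ t, w (f m)) / (1 - ∑ m ∈ s, w (f m)) ≤ 1 := by
  rw [← sum_image hf.injOn, ← sum_image hf.injOn]
  exact one_sub_sum_div_one_sub_sum_le_one hpos hw (image_subset_image hst)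
    (nonempty_compl_image hf hs)

lemma one_sub_sum_comp_div_le (hpos : ∀ i, 0 < w i) (hw : ∑ i, w i = 1)
    (hf : f.Injective) {s : Finset κ} (hs : s.card < Fintype.card ι) (t : Finset κ) :
    (1 - ∑ m ∈ t, w (f m)) / (1 - ∑ m ∈ s, w (f m))
      ≤ (⨆ i, w i) / (⨅ i, w i) * ((Fintype.card ι - t.card) / (Fintype.card ι - s.card)) := by
  rw [← sum_image hf.injOn, ← sum_image hf.injOn, ← cast_card_compl_image hf,
    ← cast_card_compl_image hf]
  exact one_sub_sum_div_one_sub_sum_le hpos hw (nonempty_compl_image hf hs) _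

end Sample

theorem bound_A_general
    (N n : ℕ) (hn : n ≤ N)
    (ω : Fin N → ℝ) (hω : ∀ i, 0 < ω i) (hsum : ∑ i, ω i = 1)
    (α : ℝ) (hα : α = (⨅ i, ω i) / (⨆ i, ω i))
    (i : Fin n → Fin N) (hi : Function.Injective i) :
    (1 - ∑ m, ω (i m)) * (∑ k : Fin n, 1 / (1 - ∑ m ∈ Finset.Iio k, ω (i m)))
        ≤ (1 / α) * ((N : ℝ) - n) * Real.log ((N : ℝ) / ((N : ℝ) - n)) ∧
    (1 - ∑ m, ω (i m)) * (∑ k : Fin n, 1 / (1 - ∑ m ∈ Finset.Iio k, ω (i m)))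
        ≤ n := by
  have hk (k : Fin n) : (Iio k).card < Fintype.card (Fin N) := by
    simpa using k.isLt.trans_le hn
  have hα_inv_nonneg : 0 ≤ 1 / α := by
    rw [hα, one_div_div]
    exact div_nonneg (Real.iSup_nonneg fun j ↦ (hω j).le) (Real.iInf_nonneg fun j ↦ (hω j).le)
  have harmonic : ((N : ℝ) - n) * ∑ k ∈ range n, 1 / ((N : ℝ) - k)
      ≤ ((N : ℝ) - n) * Real.log ((N : ℝ) / ((N : ℝ) - n)) := by
    rcases hn.lt_or_eq with h | rfl
    · exact mul_le_mul_of_nonneg_left (sum_range_one_div_sub_le_log (by exact_mod_cast h))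
        (sub_nonneg.mpr (by exact_mod_cast h.le))
    · simp
  simp only [mul_sum, mul_one_div]
  constructor
  · calc _ ≤ ∑ k : Fin n, 1 / α * (((N : ℝ) - n) / ((N : ℝ) - k)) := by
          refine sum_le_sum fun k _ ↦ ?_
          simpa [hα] using one_sub_sum_comp_div_le hω hsum hi (hk k) univ
      _ = 1 / α * (((N : ℝ) - n) * ∑ k ∈ range n, 1 / ((N : ℝ) - k)) := by
          rw [← Fin.sum_univ_eq_sum_range (fun k ↦ 1 / ((N : ℝ) - k)), mul_sum, mul_sum]
          simp only [mul_one_div]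
      _ ≤ _ := by rw [mul_assoc]; exact mul_le_mul_of_nonneg_left harmonic hα_inv_nonneg
  · calc _ ≤ ∑ _k : Fin n, (1 : ℝ) :=
          sum_le_sum fun k _ ↦ one_sub_sum_comp_div_le_one hω hsum hi (subset_univ _) (hk k)
      _ = n := by simp

/-- Bound on `A = (1-σₙ)·E[Tₙ | I₁,…,Iₙ]`: using the geometric inter-arrival formula
`E[Tₙ | I₁,…,Iₙ] = ∑_{k=1}^n 1/(1-σ_{k-1})`, for every realization `(i₁,…,iₙ)` of the
sample one has `A ≤ (1/α)(N-n)log(N/(N-n))` and `A ≤ n`. -/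
theorem bound_A
    (N n : ℕ) (hn : n ≤ N)
    (ω : Fin N → ℝ) (hω : ∀ i, 0 < ω i) (hsum : ∑ i, ω i = 1)
    (α : ℝ) (hα : α = (⨅ i, ω i) / (⨆ i, ω i)) (hα1 : α < 1)
    (i : Fin n → Fin N) (hi : Function.Injective i) :
    (1 - ∑ m, ω (i m)) * (∑ k : Fin n, 1 / (1 - ∑ m ∈ Finset.Iio k, ω (i m)))
        ≤ (1 / α) * ((N : ℝ) - n) * Real.log ((N : ℝ) / ((N : ℝ) - n)) ∧
    (1 - ∑ m, ω (i m)) * (∑ k : Fin n, 1 / (1 - ∑ m ∈ Finset.Iio k, ω (i m)))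
        ≤ n :=
  bound_A_general N n hn ω hω hsum α hα i hi
end

section
/- Let 1 ≤ d < D be integers and let (K₁,...,Kₙ) and (L₁,...,Lₙ) be samples from Polya urns with the same initial composition of N distinct labelled items and replacement numbers d and D respectively (each drawn item is returned together with d-1, resp. D-1, additional copies of itself). For values ν: {1,...,N} → ℝ, set W = ν(K₁)+...+ν(Kₙ) and Z = ν(L₁)+...+ν(Lₙ). Then W is less than Z in the convex order: E[f(W)] ≤ E[f(Z)] for every convex function f: ℝ → ℝ. -/
/-!
Couple the two urns through a random pointer structure: at draw `m`, either both urns take a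
fresh uniform label, or both copy the label of an earlier draw `j`, or the `e`-urn takes a fresh
label while the `E`-urn copies draw `j`. With the weights `stepWeight` each marginal is the
corresponding Polya transition law. Given the structure, each urn's sample gives i.i.d. uniform
labels to the trees of its pointer forest, and the trees of the `e`-forest refine those of the
`E`-forest. Merging blocks of i.i.d. labels increases a linear statistic in convex order: choosing
one element of each coarse block uniformly and giving the whole block the label of that element's
fine tree yields a statistic distributed like the coarse one, whose average is the fine one, so
Jensen's inequality applies.
-/

open Finset Function

namespace PolyaUrn

section Coarsening

variable {ι α κ : Type*} [Fintype ι] [Fintype α] [DecidableEq α] [Fintype κ]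

lemma sum_comp_eq_of_injective {Y M : Type*} [AddCommMonoid M] {t₁ t₂ : Y → α}
    (h₁ : Injective t₁) (h₂ : Injective t₂) (Φ : (Y → κ) → M) :
    ∑ x : α → κ, Φ (x ∘ t₁) = ∑ x : α → κ, Φ (x ∘ t₂) := by
  classical
  let π : Equiv.Perm α :=
    ((Equiv.ofInjective t₂ h₂).symm.trans (Equiv.ofInjective t₁ h₁)).extendSubtype
  have hπ : ∀ y, π (t₂ y) = t₁ y := fun y => by
    simp [π, Equiv.extendSubtype_apply_of_mem _ _ (Set.mem_range_self y)]
  rw [← (π.arrowCongr (Equiv.refl κ)).sum_comp]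
  refine sum_congr rfl fun x _ => congrArg Φ (funext fun y => ?_)
  simp [Equiv.arrowCongr_apply, ← hπ]

lemma sum_piFinset_apply {Y β : Type*} [Fintype Y] [DecidableEq Y] (B : Y → Finset β) (y : Y)
    (h : β → ℝ) :
    ∑ c ∈ Fintype.piFinset B, h (c y) = (∏ j ∈ univ.erase y, #(B j)) * ∑ b ∈ B y, h b := by
  classical
  rw [← sum_fiberwise_of_maps_to (g := fun c => c y) (t := B y)
    (fun c hc => Fintype.mem_piFinset.mp hc y), mul_sum]
  refine sum_congr rfl fun b hb => ?_
  rw [sum_congr rfl fun c hc => by rw [(mem_filter.mp hc).2], sum_const,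
    Fintype.card_filter_piFinset_eq_of_mem B y hb, nsmul_eq_mul]

lemma sum_piFinset_sum_card_mul_apply {Y β : Type*} [Fintype Y] [DecidableEq Y]
    (B : Y → Finset β) (h : β → ℝ) :
    ∑ c ∈ Fintype.piFinset B, ∑ y, #(B y) * h (c y)
      = #(Fintype.piFinset B) * ∑ y, ∑ b ∈ B y, h b := by
  rw [sum_comm, mul_sum]
  refine sum_congr rfl fun y _ => ?_
  rw [← mul_sum, sum_piFinset_apply, ← mul_assoc, Fintype.card_piFinset,
    ← mul_prod_erase univ (fun j => #(B j)) (mem_univ y)]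
  push_cast
  rfl

theorem sum_convexOn_comp_le {r R : ι → α} (hrR : ∀ a b, r a = r b → R a = R b) (g : κ → ℝ)
    {f : ℝ → ℝ} (hf : ConvexOn ℝ Set.univ f) :
    ∑ x : α → κ, f (∑ m, g (x (r m))) ≤ ∑ x : α → κ, f (∑ m, g (x (R m))) := by
  classical
  set B : Set.range R → Finset ι := fun y => univ.filter (Set.rangeFactorization R · = y)
  set P := Fintype.piFinset B
  have hP : (#P : ℝ) ≠ 0 := by
    refine Nat.cast_ne_zero.mpr (Finset.card_pos.mpr ?_).ne'
    refine Fintype.piFinset_nonempty.mpr fun y => ?_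
    obtain ⟨m, hm⟩ := Set.rangeFactorization_surjective y
    exact ⟨m, by simp [B, hm]⟩
  set S : (Set.range R → κ) → ℝ := fun z => ∑ y, #(B y) * g (z y)
  have coarse : ∀ x : α → κ, ∑ m, g (x (R m)) = S (x ∘ Subtype.val) := fun x => by
    rw [← sum_fiberwise univ (Set.rangeFactorization R)]
    refine sum_congr rfl fun y _ => ?_
    have hB : ∀ m ∈ B y, g (x (R m)) = g (x y) := fun m hm => by
      rw [← congrArg Subtype.val (mem_filter.mp hm).2]; rfl
    rw [sum_congr rfl hB, sum_const, nsmul_eq_mul]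
    rfl
  have fine : ∀ x : α → κ,
      ∑ m, g (x (r m)) = ∑ c ∈ P, (#P : ℝ)⁻¹ * S (x ∘ (r ∘ c)) := fun x => by
    calc ∑ m, g (x (r m)) = (#P : ℝ)⁻¹ * (#P * ∑ y, ∑ b ∈ B y, g (x (r b))) := by
          rw [inv_mul_cancel_left₀ hP]; exact (sum_fiberwise _ _ _).symm
      _ = _ := by
          rw [← mul_sum]; exact congrArg _ (sum_piFinset_sum_card_mul_apply B _).symm
  have inj : ∀ c ∈ P, Injective (r ∘ c) := fun c hc y y' hyy' => by
    have hcy : ∀ y, R (c y) = y := fun y =>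
      congrArg Subtype.val (mem_filter.mp (Fintype.mem_piFinset.mp hc y)).2
    exact Subtype.ext ((hcy y).symm.trans ((hrR _ _ hyy').trans (hcy y')))
  calc ∑ x : α → κ, f (∑ m, g (x (r m)))
      ≤ ∑ x : α → κ, ∑ c ∈ P, (#P : ℝ)⁻¹ * f (S (x ∘ (r ∘ c))) := by
        refine sum_le_sum fun x _ => ?_
        rw [fine x]
        refine hf.map_sum_le (fun _ _ => by positivity) ?_ fun _ _ => Set.mem_univ _
        rw [sum_const, nsmul_eq_mul, mul_inv_cancel₀ hP]
    _ = ∑ c ∈ P, (#P : ℝ)⁻¹ * ∑ x : α → κ, f (S (x ∘ (r ∘ c))) := by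
        rw [sum_comm]; simp only [mul_sum]
    _ = ∑ c ∈ P, (#P : ℝ)⁻¹ * ∑ x : α → κ, f (S (x ∘ Subtype.val)) :=
        sum_congr rfl fun c hc => by
        rw [sum_comp_eq_of_injective (inj c hc) Subtype.val_injective fun z => f (S z)]
    _ = ∑ x : α → κ, f (∑ m, g (x (R m))) := by
        rw [sum_const, nsmul_eq_mul, ← mul_assoc, mul_inv_cancel₀ hP, one_mul]
        simp only [coarse]

end Coarsening

lemma sum_prod_mul_eq_of_fiber_eq_piFinset {ι κ R : Type*} [Fintype ι] [DecidableEq ι]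
    {β : ι → Type*} [∀ i, Fintype (β i)] [Fintype κ] [CommSemiring R] (w : ∀ i, β i → R)
    {F : (∀ i, β i) → κ} {C : κ → ∀ i, Finset (β i)}
    (hF : ∀ p k, F p = k ↔ ∀ i, p i ∈ C k i) (h : κ → R) :
    ∑ p, (∏ i, w i (p i)) * h (F p) = ∑ k, (∏ i, ∑ t ∈ C k i, w i t) * h k := by
  classical
  rw [← sum_fiberwise univ F]
  refine sum_congr rfl fun k _ => ?_
  have hfiber : univ.filter (F · = k) = Fintype.piFinset (C k) := by ext p; simp [hF]
  rw [sum_congr rfl fun p hp => by rw [(mem_filter.mp hp).2], ← sum_mul, hfiber, prod_univ_sum]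

section Root

variable {n : ℕ}

-- `none`: a fresh draw; `some j`: a copy of the label of the earlier draw `j`.
abbrev Parent (m : Fin n) : Type := Option {j : Fin n // j < m}

def root (q : ∀ m : Fin n, Parent m) (m : Fin n) : Fin n :=
  match q m with
  | none => m
  | some j => root q j
termination_by m
decreasing_by exact j.2

variable {q : ∀ m : Fin n, Parent m} {m : Fin n}

lemma root_of_eq_none (h : q m = none) : root q m = m := by rw [root, h]

lemma root_of_eq_some {j : {j : Fin n // j < m}} (h : q m = some j) : root q m = root q j := by
  rw [root, h]

lemma root_root_of_forall_eq_some {q' : ∀ m : Fin n, Parent m}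
    (h : ∀ m j, q m = some j → q' m = some j) (m : Fin n) : root q' (root q m) = root q' m := by
  induction m using WellFoundedLT.induction with
  | _ m ih =>
    cases hm : q m with
    | none => rw [root_of_eq_none hm]
    | some j => rw [root_of_eq_some hm, ih j j.2, root_of_eq_some (h m j hm)]

lemma comp_root_eq_iff {α : Type*} (ℓ k : Fin n → α) :
    (fun m => ℓ (root q m)) = k ↔ ∀ m, (q m).elim (ℓ m) (fun j => k j) = k m := by
  constructor
  · rintro rfl m
    cases hm : q m with
    | none => simp [root_of_eq_none hm]
    | some j => simp [root_of_eq_some hm]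
  · intro h
    funext m
    induction m using WellFoundedLT.induction with
    | _ m ih =>
      have hm := h m
      cases hq : q m with
      | none => simpa [hq, root_of_eq_none hq] using hm
      | some j => simpa [hq, root_of_eq_some hq, ih j j.2] using hm

end Root

section Coupling

variable {n : ℕ}

-- `e` is the number of extra copies returned with each drawn ball.
noncomputable def polyaProb (N e : ℕ) (k : Fin n → Fin N) : ℝ :=
  ∏ m, ((1 + e * #{j | j < m ∧ k j = k m} : ℕ) : ℝ) / ((N + (m : ℕ) * e : ℕ) : ℝ)

lemma sum_ite_eq_card_filter_lt_mul {β : Type*} [DecidableEq β] (k : Fin n → β) (m : Fin n)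
    (c : ℝ) :
    ∑ j : {j : Fin n // j < m}, (if k j = k m then c else 0)
      = #{j | j < m ∧ k j = k m} * c := by
  rw [← sum_subtype (univ.filter (· < m)) (by simp) (fun j => if k j = k m then c else 0),
    ← sum_filter, filter_filter, sum_const, nsmul_eq_mul]

lemma sum_ite_elim_eq {N : ℕ} (k : Fin n → Fin N) (m : Fin n) (o : Parent m) (c : ℝ) :
    ∑ a : Fin N, (if o.elim a (fun j => k j) = k m then c / N else 0)
      = o.elim (c / N) (fun j => if k j = k m then c else 0) := by
  cases o with
  | none => exact Fintype.sum_ite_eq' (k m) _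
  | some j =>
    have hN : (N : ℝ) ≠ 0 := Nat.cast_ne_zero.mpr (k m).pos.ne'
    show ∑ _ : Fin N, (if k j = k m then c / N else 0) = if k j = k m then c else 0
    split_ifs <;> simp [mul_div_cancel₀ _ hN]

-- `none`: fresh in both urns; `inl j`: both urns copy draw `j`; `inr j`: fresh in the `e`-urn,
-- a copy of draw `j` in the `E`-urn.
abbrev Step (m : Fin n) : Type := Option ({j : Fin n // j < m} ⊕ {j : Fin n // j < m})

def Step.fine {m : Fin n} (s : Step m) : Parent m := s.bind Sum.getLeft?

def Step.coarse {m : Fin n} (s : Step m) : Parent m := s.map (Sum.elim id id)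

lemma Step.coarse_eq_of_fine_eq {m : Fin n} {s : Step m} {j : {j : Fin n // j < m}}
    (h : s.fine = some j) : s.coarse = some j := by
  rcases s with _ | j' | j' <;> simp_all [Step.fine, Step.coarse]

-- `e / (N + m e)` and `E / (N + m E)` are the probabilities that the two urns copy a given
-- earlier draw; an `inr` step carries their difference.
noncomputable def stepWeight (N e E : ℕ) (m : Fin n) : Step m → ℝ
  | none => N / (N + (m : ℕ) * E)
  | some (.inl _) => e / (N + (m : ℕ) * e)
  | some (.inr _) => E / (N + (m : ℕ) * E) - e / (N + (m : ℕ) * e)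

variable {N e E : ℕ}

lemma stepWeight_nonneg (heE : e ≤ E) (m : Fin n) (s : Step m) : 0 ≤ stepWeight N e E m s := by
  rcases s with _ | _ | _
  · exact div_nonneg (Nat.cast_nonneg _) (by positivity)
  · exact div_nonneg (Nat.cast_nonneg _) (by positivity)
  · rw [stepWeight, sub_nonneg]
    have he : (e : ℝ) ≤ E := Nat.cast_le.mpr heE
    rcases (N + (m : ℕ) * e).eq_zero_or_pos with h0 | hpos
    · rw [show (N + (m : ℕ) * e : ℝ) = 0 by exact_mod_cast h0, div_zero]; positivity
    have hpos' : (0 : ℝ) < N + (m : ℕ) * e := by exact_mod_cast hpos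
    rw [div_le_div_iff₀ hpos' (hpos'.trans_le (by gcongr))]
    nlinarith [(m : ℕ).cast_nonneg (α := ℝ), N.cast_nonneg (α := ℝ)]

lemma sum_filter_stepWeight_eq_sum_elim {m : Fin n} (π : Step m → Parent m)
    (k : Fin n → Fin N) :
    ∑ t ∈ univ.filter (fun t : Step m × Fin N => (π t.1).elim t.2 (fun j => k j) = k m),
        stepWeight N e E m t.1 / N
      = ∑ s, (π s).elim (stepWeight N e E m s / N)
          (fun j => if k j = k m then stepWeight N e E m s else 0) := by
  rw [sum_filter, Fintype.sum_prod_type]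
  exact sum_congr rfl fun s _ => sum_ite_elim_eq k m (π s) (stepWeight N e E m s)

lemma sum_filter_fine_stepWeight (k : Fin n → Fin N) (m : Fin n) :
    ∑ t ∈ univ.filter (fun t : Step m × Fin N => t.1.fine.elim t.2 (fun j => k j) = k m),
        stepWeight N e E m t.1 / N
      = ((1 + e * #{j | j < m ∧ k j = k m} : ℕ) : ℝ) / ((N + (m : ℕ) * e : ℕ) : ℝ) := by
  rw [sum_filter_stepWeight_eq_sum_elim, Fintype.sum_option, Fintype.sum_sum_type]
  simp only [Step.fine, stepWeight, Option.bind_none, Option.bind_some, Sum.getLeft?_inl,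
    Sum.getLeft?_inr, Option.elim_none, Option.elim_some]
  rw [sum_ite_eq_card_filter_lt_mul, sum_const, card_univ, Fintype.card_subtype,
    filter_gt_eq_Iio, Fin.card_Iio, nsmul_eq_mul]
  have hN : (0 : ℝ) < N := Nat.cast_pos.mpr (k m).pos
  push_cast
  field_simp
  ring

lemma sum_filter_coarse_stepWeight (k : Fin n → Fin N) (m : Fin n) :
    ∑ t ∈ univ.filter (fun t : Step m × Fin N => t.1.coarse.elim t.2 (fun j => k j) = k m),
        stepWeight N e E m t.1 / N
      = ((1 + E * #{j | j < m ∧ k j = k m} : ℕ) : ℝ) / ((N + (m : ℕ) * E : ℕ) : ℝ) := by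
  rw [sum_filter_stepWeight_eq_sum_elim, Fintype.sum_option, Fintype.sum_sum_type]
  simp only [Step.coarse, stepWeight, Option.map_none, Option.map_some, Sum.elim_inl,
    Sum.elim_inr, id, Option.elim_none, Option.elim_some]
  rw [sum_ite_eq_card_filter_lt_mul, sum_ite_eq_card_filter_lt_mul]
  have hN : (0 : ℝ) < N := Nat.cast_pos.mpr (k m).pos
  push_cast
  field_simp
  ring

lemma sum_stepWeight_mul_comp_root (π : ∀ m : Fin n, Step m → Parent m)
    (h : (Fin n → Fin N) → ℝ) :
    ∑ s : (∀ m : Fin n, Step m), ∑ ℓ : Fin n → Fin N,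
        (∏ m, stepWeight N e E m (s m) / N) * h (fun m => ℓ (root (fun i => π i (s i)) m))
      = ∑ k, (∏ m, ∑ t ∈ univ.filter (fun t : Step m × Fin N =>
          (π m t.1).elim t.2 (fun j => k j) = k m), stepWeight N e E m t.1 / N) * h k := by
  rw [← Fintype.sum_prod_type', ← (Equiv.arrowProdEquivProdArrow _ _ _).sum_comp]
  exact sum_prod_mul_eq_of_fiber_eq_piFinset
    (fun m (t : Step m × Fin N) => stepWeight N e E m t.1 / N)
    (fun p k => by simpa using comp_root_eq_iff (fun m => (p m).2) k) h

lemma sum_stepWeight_mul_fine_eq (h : (Fin n → Fin N) → ℝ) :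
    ∑ s : (∀ m : Fin n, Step m), ∑ ℓ : Fin n → Fin N,
        (∏ m, stepWeight N e E m (s m) / N) * h (fun m => ℓ (root (fun i => (s i).fine) m))
      = ∑ k, polyaProb N e k * h k := by
  simp only [sum_stepWeight_mul_comp_root, sum_filter_fine_stepWeight, polyaProb]

lemma sum_stepWeight_mul_coarse_eq (h : (Fin n → Fin N) → ℝ) :
    ∑ s : (∀ m : Fin n, Step m), ∑ ℓ : Fin n → Fin N,
        (∏ m, stepWeight N e E m (s m) / N) * h (fun m => ℓ (root (fun i => (s i).coarse) m))
      = ∑ k, polyaProb N E k * h k := by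
  simp only [sum_stepWeight_mul_comp_root, sum_filter_coarse_stepWeight, polyaProb]

theorem sum_polyaProb_mul_le (heE : e ≤ E) (ν : Fin N → ℝ) {f : ℝ → ℝ}
    (hf : ConvexOn ℝ Set.univ f) :
    ∑ k : Fin n → Fin N, polyaProb N e k * f (∑ m, ν (k m))
      ≤ ∑ k : Fin n → Fin N, polyaProb N E k * f (∑ m, ν (k m)) := by
  rw [← sum_stepWeight_mul_fine_eq (E := E), ← sum_stepWeight_mul_coarse_eq (e := e)]
  refine sum_le_sum fun s _ => ?_
  simp only [← mul_sum]
  refine mul_le_mul_of_nonneg_left ?_ <|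
    prod_nonneg fun m _ => div_nonneg (stepWeight_nonneg heE m (s m)) N.cast_nonneg
  have hroot := root_root_of_forall_eq_some (q := fun i => (s i).fine)
    (q' := fun i => (s i).coarse) fun _ _ => Step.coarse_eq_of_fine_eq
  exact sum_convexOn_comp_le (fun a b hab => by rw [← hroot a, hab, hroot]) ν hf

end Coupling

end PolyaUrn

theorem polya_convex_order_general
    (N n d D : ℕ) (hdD : d < D)
    (ν : Fin N → ℝ) (f : ℝ → ℝ) (hconv : ConvexOn ℝ Set.univ f) :
    ∑ k : Fin n → Fin N,
        (∏ m, ((1 + (d - 1) * (Finset.univ.filter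
            (fun j : Fin n => j < m ∧ k j = k m)).card : ℕ) : ℝ)
          / ((N + (m : ℕ) * (d - 1) : ℕ) : ℝ)) * f (∑ m, ν (k m))
      ≤ ∑ k : Fin n → Fin N,
        (∏ m, ((1 + (D - 1) * (Finset.univ.filter
            (fun j : Fin n => j < m ∧ k j = k m)).card : ℕ) : ℝ)
          / ((N + (m : ℕ) * (D - 1) : ℕ) : ℝ)) * f (∑ m, ν (k m)) :=
  PolyaUrn.sum_polyaProb_mul_le (Nat.sub_le_sub_right hdD.le 1) ν hconv

/-- Polya urn comparison: linear statistics of a `d`-Polya sample are dominated by those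
of a `D`-Polya sample in the convex order, for `d < D`. The law of a `c`-Polya sample of
size `n` from `N` distinct items is given explicitly: the `m`-th draw (0-indexed) equals
label `ℓ` with probability `(1 + (c-1)·#{j < m : k_j = ℓ})/(N + m(c-1))`. -/
theorem polya_convex_order
    (N n d D : ℕ) (hN : 0 < N) (hd : 1 ≤ d) (hdD : d < D)
    (ν : Fin N → ℝ) (f : ℝ → ℝ) (hconv : ConvexOn ℝ Set.univ f) :
    ∑ k : Fin n → Fin N,
        (∏ m, ((1 + (d - 1) * (Finset.univ.filter
            (fun j : Fin n => j < m ∧ k j = k m)).card : ℕ) : ℝ)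
          / ((N + (m : ℕ) * (d - 1) : ℕ) : ℝ)) * f (∑ m, ν (k m))
      ≤ ∑ k : Fin n → Fin N,
        (∏ m, ((1 + (D - 1) * (Finset.univ.filter
            (fun j : Fin n => j < m ∧ k j = k m)).card : ℕ) : ℝ)
          / ((N + (m : ℕ) * (D - 1) : ℕ) : ℝ)) * f (∑ m, ν (k m)) :=
  polya_convex_order_general N n d D hdD ν f hconv
end
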